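/- arXiv:1007.3767 — 6 statements merged into one kernel-verified Lean document; each statement's English description precedes it below -/
import Mathlib

section
/- Let G be a graph on n vertices containing at most p·n cherries such that each vertex of G is contained in at most q cherries, where p and q are positive reals. If k is a positive integer with k ≤ (1/3)·(5/6)^5·(n−2)/(q+3p), then every locally k-bounded edge colouring of the complete graph K_n contains a copy of G that is properly coloured, i.e., there is an injection σ: V(G) → V(K_n) such that any two edges of G sharing a vertex are mapped by σ to edges of K_n receiving different colours. -/
/-!
Embed `G` by a uniformly random permutation `σ` of `Fin n`. For every cherry `(x; y, z)` of `G`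
(with `y < z`) and every injective triple `(a, u, v)` with `χ(au) = χ(av)` there is a bad event
`σ (x, y, z) = (a, u, v)`, and `σ` is proper iff it avoids them all. Give each event the six slots
`inl x, inl y, inl z, inr a, inr u, inr v`. Composing `σ` with a permutation supported on
`{a, u, v}` and its image triple is a switching which shows that, conditioned on avoiding any family
of events sharing no slot with it, an event has probability at most `1 / (n (n-1) (n-2))`. The
events through one slot form a clique of the dependency graph, so the cluster-expansion (clique)
version of the lopsided local lemma applies: a slot `inl w` lies in at most `q · n(n-1)k` events
and a slot `inr b` in at most `pn · 3(n-1)k`, and with `m = (2/5) / (n(n-1)k(q+3p))` the criterion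
reduces, by AM–GM, to `(6/5)^6 k (q + 3p) ≤ (2/5)(n-2)`, which is the hypothesis on `k`.

The local lemma is proved through the independence polynomial `Z` of the dependency graph at
fugacity `-P`: under the criterion `Z` is positive and grows by at most the clique factor when a
clique is removed, and `#(avoiding V) / Z V` is monotone in `V`, so `#(avoiding T) ≥ #Ω · Z T > 0`.
-/

open Finset Function Equiv

namespace CliqueLLL

section IndepPoly

variable {ι S : Type*} (slots : ι → Finset S) (P : ℝ)

open Classical in
noncomputable def indepPoly (V : Finset ι) : ℝ :=
  ∑ A ∈ V.powerset with (↑(A : Finset ι) : Set ι).PairwiseDisjoint slots, (-P) ^ #A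

@[simp]
lemma indepPoly_empty : indepPoly slots P ∅ = 1 := by
  simp [indepPoly, sum_filter]

variable [DecidableEq S]

lemma indepPoly_insert [DecidableEq ι] {V : Finset ι} {j : ι} (hj : j ∉ V) :
    indepPoly slots P (insert j V) =
      indepPoly slots P V - P * indepPoly slots P {i ∈ V | Disjoint (slots j) (slots i)} := by
  classical
  set N := {i ∈ V | Disjoint (slots j) (slots i)}
  have hindep : ∀ A ⊆ V, (↑(insert j A) : Set ι).PairwiseDisjoint slots ↔
      (↑A : Set ι).PairwiseDisjoint slots ∧ A ⊆ N := by
    intro A hA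
    rw [coe_insert, Set.pairwiseDisjoint_insert]
    refine and_congr_right fun _ => ⟨fun h i hi => ?_, fun h i hi _ => (mem_filter.1 (h hi)).2⟩
    exact mem_filter.2 ⟨hA hi, h i hi (ne_of_mem_of_not_mem hi (fun h => hj (hA h))).symm⟩
  have hcontract : ∑ A ∈ V.powerset, (if (↑(insert j A) : Set ι).PairwiseDisjoint slots
      then (-P) ^ #(insert j A) else 0) = -P * indepPoly slots P N := by
    rw [indepPoly, sum_filter, mul_sum,
      ← sum_subset (powerset_mono.2 (filter_subset (fun i => Disjoint (slots j) (slots i)) V))]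
    · refine sum_congr rfl fun A hA => ?_
      have hAN := mem_powerset.1 hA
      have hAV := hAN.trans (filter_subset _ V)
      rw [card_insert_of_notMem fun h => hj (hAV h), if_congr (hindep A hAV) rfl rfl]
      simp [hAN, pow_succ, mul_comm]
    · intro A hA hAN
      rw [if_neg fun h => hAN (mem_powerset.2 ((hindep A (mem_powerset.1 hA)).1 h).2)]
  have hdelete : indepPoly slots P V = ∑ A ∈ V.powerset,
      (if (↑A : Set ι).PairwiseDisjoint slots then (-P) ^ #A else 0) := sum_filter _ _
  rw [indepPoly, sum_filter, sum_powerset_insert hj, hcontract, hdelete]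
  ring

lemma indepPoly_union_of_forall_mem [DecidableEq ι] {V K : Finset ι} {s : S} (hVK : Disjoint V K)
    (hK : ∀ j ∈ K, s ∈ slots j) :
    indepPoly slots P (V ∪ K) = indepPoly slots P V -
      P * ∑ j ∈ K, indepPoly slots P {i ∈ V | Disjoint (slots j) (slots i)} := by
  induction K using Finset.induction_on with
  | empty => simp
  | insert j K hjK ih =>
    have hj : j ∉ V ∪ K := by
      simp [hjK, disjoint_right.1 hVK (mem_insert_self j K)]
    have hN : {i ∈ V ∪ K | Disjoint (slots j) (slots i)} =
        {i ∈ V | Disjoint (slots j) (slots i)} := by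
      rw [filter_union, (filter_eq_empty_iff (s := K)).2, union_empty]
      intro i hi hd
      exact disjoint_left.1 hd (hK j (mem_insert_self j K)) (hK i (mem_insert_of_mem hi))
    rw [union_insert, indepPoly_insert slots P hj, hN,
      ih (disjoint_of_subset_right (subset_insert j K) hVK) fun i hi => hK i (mem_insert_of_mem hi),
      sum_insert hjK]
    ring

lemma indepPoly_filter_disjoint_le {U : Finset ι} {f : S → ℝ} (hf : ∀ s, 0 ≤ f s)
    (hclique : ∀ A ⊆ U, ∀ s, indepPoly slots P {i ∈ A | s ∉ slots i} ≤ f s * indepPoly slots P A)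
    (ss : Finset S) :
    indepPoly slots P {i ∈ U | Disjoint ss (slots i)} ≤ (∏ s ∈ ss, f s) * indepPoly slots P U := by
  induction ss using Finset.induction_on with
  | empty => simp
  | insert s ss hs ih =>
    have hfilter : {i ∈ U | Disjoint (insert s ss) (slots i)} =
        {i ∈ {i ∈ U | Disjoint ss (slots i)} | s ∉ slots i} := by
      ext i
      simp only [mem_filter, disjoint_insert_left, and_assoc, and_comm (a := s ∉ slots i)]
    calc _ ≤ f s * indepPoly slots P {i ∈ U | Disjoint ss (slots i)} :=
          hfilter ▸ hclique _ (filter_subset _ _) s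
      _ ≤ f s * ((∏ s ∈ ss, f s) * indepPoly slots P U) := mul_le_mul_of_nonneg_left ih (hf s)
      _ = (∏ s ∈ insert s ss, f s) * indepPoly slots P U := by rw [prod_insert hs, mul_assoc]

lemma one_sub_mul_indepPoly_le_indepPoly_insert [DecidableEq ι] {V : Finset ι} {j : ι} (hj : j ∉ V)
    {f : S → ℝ} {m : ℝ} (hP : 0 ≤ P) (hf : ∀ s, 0 ≤ f s)
    (hclique : ∀ A ⊆ V, ∀ s, indepPoly slots P {i ∈ A | s ∉ slots i} ≤ f s * indepPoly slots P A)
    (hV : 0 ≤ indepPoly slots P V) (hcrit : P * ∏ s ∈ slots j, f s ≤ m) :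
    (1 - m) * indepPoly slots P V ≤ indepPoly slots P (insert j V) := by
  have hN := indepPoly_filter_disjoint_le slots P hf hclique (slots j)
  rw [indepPoly_insert slots P hj]
  nlinarith [mul_le_mul_of_nonneg_left hN hP, mul_le_mul_of_nonneg_right hcrit hV]

/-- The factor `1 + ∑_{j ∋ s} μ_j` of the cluster-expansion criterion for the clique of events
through the slot `s`, with all weights `μ_j = m`. -/
def cliqueFactor (T : Finset ι) (m : ℝ) (s : S) : ℝ := 1 + m * #{j ∈ T | s ∈ slots j}

variable {slots P} {T : Finset ι} {m : ℝ}

lemma cliqueFactor_pos (hm : 0 ≤ m) (s : S) : 0 < cliqueFactor slots T m s := by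
  unfold cliqueFactor; positivity

lemma indepPoly_filter_notMem_le {U : Finset ι} (hUT : U ⊆ T) (hP : 0 ≤ P) (hm : 0 ≤ m)
    (hcrit : ∀ i ∈ T, P * ∏ s ∈ slots i, cliqueFactor slots T m s ≤ m) (s : S)
    (hclique : ∀ A ⊂ U, ∀ s, indepPoly slots P {i ∈ A | s ∉ slots i} ≤
      cliqueFactor slots T m s * indepPoly slots P A)
    (hX : 0 ≤ indepPoly slots P {i ∈ U | s ∉ slots i}) :
    indepPoly slots P {i ∈ U | s ∉ slots i} ≤ cliqueFactor slots T m s * indepPoly slots P U := by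
  classical
  set V := {i ∈ U | s ∉ slots i}
  set K := {i ∈ U | s ∈ slots i}
  set X := indepPoly slots P V
  set c := cliqueFactor slots T m s with hc_def
  have hc : 0 < c := cliqueFactor_pos hm s
  have hterm : ∀ j ∈ K,
      P * indepPoly slots P {i ∈ V | Disjoint (slots j) (slots i)} ≤ m / c * X := by
    intro j hj
    obtain ⟨hjU, hsj⟩ := mem_filter.1 hj
    have hVU : V ⊂ U := filter_ssubset.2 ⟨j, hjU, not_not.2 hsj⟩
    -- no event of `V` uses the slot `s`, so only the other slots of `j` cost a factor
    have hNV : {i ∈ V | Disjoint (slots j) (slots i)} =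
        {i ∈ V | Disjoint ((slots j).erase s) (slots i)} := by
      refine filter_congr fun i hi => ?_
      conv_lhs => rw [← insert_erase hsj]
      rw [disjoint_insert_left]
      exact and_iff_right (mem_filter.1 hi).2
    have hchain := indepPoly_filter_disjoint_le slots P (fun s => (cliqueFactor_pos hm s).le)
      (fun A hA => hclique A (hA.trans_ssubset hVU)) ((slots j).erase s)
    have hcrit_j : P * ∏ s' ∈ (slots j).erase s, cliqueFactor slots T m s' ≤ m / c := by
      have := hcrit j (hUT hjU)
      rw [← mul_prod_erase _ _ hsj] at this
      rw [le_div_iff₀ hc]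
      linarith
    rw [hNV]
    calc _ ≤ P * ((∏ s' ∈ (slots j).erase s, cliqueFactor slots T m s') * X) :=
          mul_le_mul_of_nonneg_left hchain hP
      _ = (P * ∏ s' ∈ (slots j).erase s, cliqueFactor slots T m s') * X := by ring
      _ ≤ m / c * X := mul_le_mul_of_nonneg_right hcrit_j hX
  have hU : indepPoly slots P U =
      X - P * ∑ j ∈ K, indepPoly slots P {i ∈ V | Disjoint (slots j) (slots i)} := by
    rw [← indepPoly_union_of_forall_mem slots P (disjoint_filter_filter_not U U _).symm
      (fun j hj => (mem_filter.1 hj).2), union_comm, filter_union_filter_not_eq]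
  have hsum : P * ∑ j ∈ K, indepPoly slots P {i ∈ V | Disjoint (slots j) (slots i)} ≤
      #K * (m / c * X) := by
    rw [mul_sum]
    exact (sum_le_sum hterm).trans (by rw [sum_const, nsmul_eq_mul])
  have hKc : (#K : ℝ) * m ≤ c - 1 := by
    rw [hc_def, cliqueFactor, add_sub_cancel_left, mul_comm]
    exact mul_le_mul_of_nonneg_left (by exact_mod_cast card_le_card (filter_subset_filter _ hUT)) hm
  have hKX : (#K : ℝ) * (m / c * X) ≤ X - X / c := by
    calc (#K : ℝ) * (m / c * X) = (#K * m) * (X / c) := by ring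
      _ ≤ (c - 1) * (X / c) := mul_le_mul_of_nonneg_right hKc (div_nonneg hX hc.le)
      _ = X - X / c := by field_simp
  have : X / c ≤ indepPoly slots P U := by linarith
  rwa [div_le_iff₀' hc] at this

theorem indepPoly_pos_and_clique_bound (hP : 0 ≤ P) (hm : 0 ≤ m) (hm1 : m < 1)
    (hcrit : ∀ i ∈ T, P * ∏ s ∈ slots i, cliqueFactor slots T m s ≤ m) :
    ∀ U ⊆ T, 0 < indepPoly slots P U ∧ ∀ s, indepPoly slots P {i ∈ U | s ∉ slots i} ≤
      cliqueFactor slots T m s * indepPoly slots P U := by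
  classical
  intro U
  induction U using Finset.strongInduction with
  | H U ih =>
  intro hUT
  have hclique : ∀ A ⊂ U, ∀ s, indepPoly slots P {i ∈ A | s ∉ slots i} ≤
      cliqueFactor slots T m s * indepPoly slots P A :=
    fun A hA => (ih A hA (hA.subset.trans hUT)).2
  have hposU : 0 < indepPoly slots P U := by
    rcases U.eq_empty_or_nonempty with rfl | ⟨j, hj⟩
    · simp
    have hE : U.erase j ⊂ U := erase_ssubset hj
    have hE_pos := (ih _ hE (hE.subset.trans hUT)).1
    rw [← insert_erase hj]
    refine (mul_pos (sub_pos.2 hm1) hE_pos).trans_le ?_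
    exact one_sub_mul_indepPoly_le_indepPoly_insert slots P (notMem_erase j U) hP
      (fun s => (cliqueFactor_pos hm s).le) (fun A hA => hclique A (hA.trans_ssubset hE))
      hE_pos.le (hcrit j (hUT hj))
  refine ⟨hposU, fun s => indepPoly_filter_notMem_le hUT hP hm hcrit s hclique ?_⟩
  rcases (filter_subset (fun i => s ∉ slots i) U).ssubset_or_eq with hV | hV
  · exact (ih _ hV (hV.subset.trans hUT)).1.le
  · rw [hV]; exact hposU.le

end IndepPoly

section Avoiding

variable {ι Ω : Type*} [Fintype Ω] [DecidableEq Ω] (E : ι → Finset Ω)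

def avoiding (V : Finset ι) : Finset Ω := {ω | ∀ j ∈ V, ω ∉ E j}

lemma card_avoiding_le_card_avoiding_insert_add [DecidableEq ι] {U N : Finset ι} (hN : N ⊆ U)
    (i : ι) : #(avoiding E U) ≤ #(avoiding E (insert i U)) + #(E i ∩ avoiding E N) := by
  refine (card_le_card fun ω hω => ?_).trans (card_union_le _ _)
  simp only [avoiding, mem_filter, mem_univ, true_and, mem_union, mem_inter, forall_mem_insert]
    at hω ⊢
  by_cases hωi : ω ∈ E i
  · exact Or.inr ⟨hωi, fun j hj => hω j (hN hj)⟩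
  · exact Or.inl ⟨hωi, hω⟩

variable {S : Type*} [DecidableEq S] {slots : ι → Finset S} {P : ℝ}

lemma card_avoiding_div_indepPoly_le_insert [DecidableEq ι] {U : Finset ι} {i : ι} (hi : i ∉ U)
    (hP : 0 ≤ P) (hZU : 0 < indepPoly slots P U) (hZ : 0 < indepPoly slots P (insert i U))
    (hZN : 0 < indepPoly slots P {j ∈ U | Disjoint (slots i) (slots j)})
    (hlop : (#(E i ∩ avoiding E {j ∈ U | Disjoint (slots i) (slots j)}) : ℝ) ≤
      P * #(avoiding E {j ∈ U | Disjoint (slots i) (slots j)}))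
    (hN : #(avoiding E {j ∈ U | Disjoint (slots i) (slots j)}) /
        indepPoly slots P {j ∈ U | Disjoint (slots i) (slots j)} ≤
      #(avoiding E U) / indepPoly slots P U) :
    #(avoiding E U) / indepPoly slots P U ≤
      #(avoiding E (insert i U)) / indepPoly slots P (insert i U) := by
  set N := {j ∈ U | Disjoint (slots i) (slots j)}
  set r := #(avoiding E U) / indepPoly slots P U
  have hWU : (#(avoiding E U) : ℝ) = r * indepPoly slots P U := (div_mul_cancel₀ _ hZU.ne').symm
  have hWN : (#(avoiding E N) : ℝ) ≤ r * indepPoly slots P N := (div_le_iff₀ hZN).1 hN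
  have hW : (#(avoiding E U) : ℝ) ≤ #(avoiding E (insert i U)) + #(E i ∩ avoiding E N) := by
    exact_mod_cast card_avoiding_le_card_avoiding_insert_add E (filter_subset _ U) i
  rw [le_div_iff₀ hZ, indepPoly_insert slots P hi]
  nlinarith [mul_le_mul_of_nonneg_left hWN hP]

lemma card_avoiding_div_indepPoly_mono {T : Finset ι} (hP : 0 ≤ P)
    (hpos : ∀ U ⊆ T, 0 < indepPoly slots P U)
    (hlop : ∀ i ∈ T, ∀ Y ⊆ T, (∀ j ∈ Y, Disjoint (slots i) (slots j)) →
      (#(E i ∩ avoiding E Y) : ℝ) ≤ P * #(avoiding E Y)) :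
    ∀ U ⊆ T, ∀ A ⊆ U,
      #(avoiding E A) / indepPoly slots P A ≤ #(avoiding E U) / indepPoly slots P U := by
  classical
  intro U
  induction U using Finset.strongInduction with
  | H U ih =>
  intro hUT A hAU
  rcases hAU.ssubset_or_eq with hAU | rfl
  · obtain ⟨i, hiU, hiA⟩ := exists_of_ssubset hAU
    have hE : U.erase i ⊂ U := erase_ssubset hiU
    have hET : U.erase i ⊆ T := hE.subset.trans hUT
    have hN : {j ∈ U.erase i | Disjoint (slots i) (slots j)} ⊆ U.erase i := filter_subset _ _
    have hAE : A ⊆ U.erase i := fun j hj => mem_erase.2 ⟨ne_of_mem_of_not_mem hj hiA, hAU.subset hj⟩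
    refine (ih _ hE hET A hAE).trans ?_
    conv_rhs => rw [← insert_erase hiU]
    refine card_avoiding_div_indepPoly_le_insert E (notMem_erase i U) hP (hpos _ hET)
      (by rw [insert_erase hiU]; exact hpos U hUT) (hpos _ (hN.trans hET))
      (hlop i (hUT hiU) _ (hN.trans hET) fun j hj => (mem_filter.1 hj).2) (ih _ hE hET _ hN)
  · exact le_rfl

end Avoiding

theorem exists_forall_notMem_of_clique_criterion {ι S Ω : Type*} [DecidableEq S] [Fintype Ω]
    [DecidableEq Ω] [Nonempty Ω] (slots : ι → Finset S) (E : ι → Finset Ω) (T : Finset ι)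
    {P m : ℝ} (hP : 0 ≤ P) (hm : 0 ≤ m) (hm1 : m < 1)
    (hcrit : ∀ i ∈ T, P * ∏ s ∈ slots i, cliqueFactor slots T m s ≤ m)
    (hlop : ∀ i ∈ T, ∀ Y ⊆ T, (∀ j ∈ Y, Disjoint (slots i) (slots j)) →
      (#(E i ∩ avoiding E Y) : ℝ) ≤ P * #(avoiding E Y)) :
    ∃ ω, ∀ i ∈ T, ω ∉ E i := by
  have hpos U hU := (indepPoly_pos_and_clique_bound hP hm hm1 hcrit U hU).1
  have hmono := card_avoiding_div_indepPoly_mono E hP hpos hlop T subset_rfl ∅ (empty_subset T)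
  have hΩ : (0 : ℝ) < #(avoiding E (∅ : Finset ι)) := by
    simp [avoiding, Fintype.card_pos]
  obtain ⟨ω, hω⟩ : (avoiding E T).Nonempty := by
    simp only [indepPoly_empty, div_one] at hmono
    rw [← card_pos, ← Nat.cast_pos (α := ℝ), ← div_pos_iff_of_pos_right (hpos T subset_rfl)]
    exact hΩ.trans_le hmono
  exact ⟨ω, by simpa [avoiding] using hω⟩

end CliqueLLL

section PermExtension

variable {α κ : Type*} [DecidableEq α]

lemma exists_perm_extend_injective [DecidableEq κ] {r t : κ → α} (hr : Injective r)
    (ht : Injective t) (s : Finset κ) :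
    ∃ π : Perm α, (∀ j ∈ s, π (r j) = t j) ∧ ∀ c, π c ≠ c → ∃ j ∈ s, c = r j ∨ c = t j := by
  induction s using Finset.induction_on with
  | empty => exact ⟨1, by simp, by simp⟩
  | insert a s ha ih =>
    obtain ⟨π, hπ, hsupp⟩ := ih
    refine ⟨swap (π (r a)) (t a) * π, ?_, fun c hc => ?_⟩
    · simp only [forall_mem_insert, Perm.mul_apply, swap_apply_left, true_and]
      intro j hj
      have hja : j ≠ a := ne_of_mem_of_not_mem hj ha
      rw [hπ j hj, swap_apply_of_ne_of_ne (by rw [← hπ j hj]; exact π.injective.ne (hr.ne hja))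
        (ht.ne hja)]
    by_cases hπc : π c = c
    · rw [Perm.mul_apply, hπc] at hc
      rcases eq_or_ne c (t a) with rfl | hca
      · exact ⟨a, mem_insert_self a s, Or.inr rfl⟩
      have hcr : c = π (r a) := by_contra fun h => hc (swap_apply_of_ne_of_ne h hca)
      exact ⟨a, mem_insert_self a s, Or.inl (π.injective (hπc.trans hcr))⟩
    · obtain ⟨j, hj, h⟩ := hsupp c hπc
      exact ⟨j, mem_insert_of_mem hj, h⟩

lemma exists_perm_extend_injective_apply_eq_self [Finite κ] {r t : κ → α} (hr : Injective r)
    (ht : Injective t) :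
    ∃ π : Perm α, (∀ j, π (r j) = t j) ∧
      ∀ c, c ∉ Set.range r → π c ∉ Set.range r → π c = c := by
  classical
  have := Fintype.ofFinite κ
  obtain ⟨π, hπ, hsupp⟩ := exists_perm_extend_injective hr ht univ
  refine ⟨π, fun j => hπ j (mem_univ j), fun c hc hπc => by_contra fun hne => ?_⟩
  -- `π` moves only points of `range r ∪ range t` and maps `range r` onto `range t`
  obtain ⟨j, -, rfl | rfl⟩ := hsupp c hne
  · exact hc ⟨j, rfl⟩
  by_cases hππ : π (π (t j)) = π (t j)
  · exact hne (π.injective hππ)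
  obtain ⟨j', -, h | h⟩ := hsupp _ hππ
  · exact hπc ⟨j', h.symm⟩
  · rw [← hπ j' (mem_univ _)] at h
    exact hc ⟨j', (π.injective h).symm⟩

end PermExtension

namespace ProperCopy

open CliqueLLL

section PinnedEvents

variable {α κ : Type*} [DecidableEq α] [Fintype κ]

def pinSlots (e : (κ → α) × (κ → α)) : Finset (α ⊕ α) :=
  (univ.image e.1).disjSum (univ.image e.2)

lemma ne_of_disjoint_pinSlots {e e' : (κ → α) × (κ → α)}
    (h : Disjoint (pinSlots e) (pinSlots e')) (j j' : κ) : e.1 j ≠ e'.1 j' ∧ e.2 j ≠ e'.2 j' := by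
  constructor <;> intro hjj
  · refine disjoint_left.1 h (show Sum.inl (e.1 j) ∈ pinSlots e by simp [pinSlots]) ?_
    simp only [pinSlots, inl_mem_disjSum, mem_image, mem_univ, true_and]
    exact ⟨j', hjj.symm⟩
  · refine disjoint_left.1 h (show Sum.inr (e.2 j) ∈ pinSlots e by simp [pinSlots]) ?_
    simp only [pinSlots, inr_mem_disjSum, mem_image, mem_univ, true_and]
    exact ⟨j', hjj.symm⟩

lemma filter_inl_mem_pinSlots_product (s t : Finset (κ → α)) (w : α) :
    {e ∈ s ×ˢ t | Sum.inl w ∈ pinSlots e} = {d ∈ s | w ∈ univ.image d} ×ˢ t := by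
  simp only [pinSlots, inl_mem_disjSum]
  exact filter_product_left (fun d => w ∈ univ.image d)

lemma filter_inr_mem_pinSlots_product (s t : Finset (κ → α)) (b : α) :
    {e ∈ s ×ˢ t | Sum.inr b ∈ pinSlots e} = s ×ˢ {r ∈ t | b ∈ univ.image r} := by
  simp only [pinSlots, inr_mem_disjSum]
  exact filter_product_right (fun r => b ∈ univ.image r)

lemma prod_pinSlots_le {f : α ⊕ α → ℝ} {A B : ℝ} (hf : ∀ s, 0 ≤ f s) (hA1 : 1 ≤ A) (hB1 : 1 ≤ B)
    (hA : ∀ w, f (Sum.inl w) ≤ A) (hB : ∀ b, f (Sum.inr b) ≤ B) (e : (κ → α) × (κ → α)) :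
    ∏ s ∈ pinSlots e, f s ≤ A ^ Fintype.card κ * B ^ Fintype.card κ := by
  have hcard (d : κ → α) : #(univ.image d) ≤ Fintype.card κ := card_image_le.trans_eq card_univ
  rw [pinSlots, prod_disjSum]
  refine mul_le_mul ?_ ?_ (prod_nonneg fun _ _ => hf _) (by positivity)
  · exact (prod_le_prod (fun _ _ => hf _) fun w _ => hA w).trans
      ((prod_const A).trans_le (pow_le_pow_right₀ hA1 (hcard e.1)))
  · exact (prod_le_prod (fun _ _ => hf _) fun b _ => hB b).trans
      ((prod_const B).trans_le (pow_le_pow_right₀ hB1 (hcard e.2)))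

variable [Fintype α]

def pinned (e : (κ → α) × (κ → α)) : Finset (Perm α) := {σ | ∀ j, σ (e.1 j) = e.2 j}

theorem card_pinned_inter_avoiding_le (e : (κ → α) × (κ → α)) (he : Injective e.2)
    (Y : Finset ((κ → α) × (κ → α))) (hY : ∀ e' ∈ Y, Disjoint (pinSlots e) (pinSlots e')) :
    (#(pinned e ∩ avoiding pinned Y) : ℝ) ≤
      (Fintype.card (κ ↪ α) : ℝ)⁻¹ * #(avoiding pinned Y) := by
  choose π hπ hfix using fun t : κ ↪ α =>
    exists_perm_extend_injective_apply_eq_self he t.injective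
  have hswitch : #((pinned e ∩ avoiding pinned Y) ×ˢ (univ : Finset (κ ↪ α))) ≤
      #(avoiding pinned Y) := by
    refine card_le_card_of_injOn (fun p => π p.2 * p.1) (fun p hp => ?_) ?_
    · simp only [coe_product, coe_inter, Set.mem_prod, Set.mem_inter_iff, mem_coe, avoiding,
        pinned, mem_filter, mem_univ, true_and] at hp ⊢
      obtain ⟨⟨hσe, hσY⟩, -⟩ := hp
      intro e' he' hpin
      refine hσY e' he' fun j => ?_
      have hne := ne_of_disjoint_pinSlots (hY e' he')
      rw [← hpin j, Perm.mul_apply, hfix]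
      · rintro ⟨j', hj'⟩
        rw [← hσe j'] at hj'
        exact (hne j' j).1 (p.1.injective hj')
      · rw [← Perm.mul_apply, hpin j]
        rintro ⟨j', hj'⟩
        exact (hne j' j).2 hj'
    · rintro ⟨σ, t⟩ hp ⟨σ', t'⟩ hp' h
      simp only [coe_product, coe_inter, Set.mem_prod, Set.mem_inter_iff, mem_coe, pinned,
        mem_filter, mem_univ, true_and] at hp hp' h
      obtain rfl : t = t' := by
        ext j
        simpa [hp.1.1 j, hp'.1.1 j, hπ] using congrArg (· (e.1 j)) h
      exact Prod.ext (mul_left_cancel h) rfl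
  have hpos : (0 : ℝ) < Fintype.card (κ ↪ α) := by
    exact_mod_cast Fintype.card_pos_iff.2 ⟨(⟨e.2, he⟩ : κ ↪ α)⟩
  rw [inv_mul_eq_div, le_div_iff₀ hpos]
  rw [card_product, card_univ] at hswitch
  exact_mod_cast hswitch

end PinnedEvents

section Arithmetic

variable {n k p q : ℝ}

lemma pos_and_two_lt_of_le (hp : 0 ≤ p) (hq : 0 ≤ q) (hk : 0 < k)
    (hkle : k ≤ 1 / 3 * (5 / 6) ^ 5 * (n - 2) / (q + 3 * p)) : 0 < q + 3 * p ∧ 2 < n := by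
  have hpq : 0 < q + 3 * p := by
    refine (add_nonneg hq (by positivity)).lt_of_ne fun h => ?_
    rw [← h, div_zero] at hkle
    linarith
  refine ⟨hpq, ?_⟩
  rw [le_div_iff₀ hpq] at hkle
  linarith [mul_pos hk hpq]

lemma weight_pos (hp : 0 ≤ p) (hq : 0 ≤ q) (hk : 0 < k)
    (hkle : k ≤ 1 / 3 * (5 / 6) ^ 5 * (n - 2) / (q + 3 * p)) :
    0 < 2 / 5 / (k * (n * (n - 1)) * (q + 3 * p)) := by
  obtain ⟨hpq, hn⟩ := pos_and_two_lt_of_le hp hq hk hkle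
  have : 0 < n - 1 := by linarith
  positivity

lemma inv_mul_le_weight (hp : 0 ≤ p) (hq : 0 ≤ q) (hk : 0 < k)
    (hkle : k ≤ 1 / 3 * (5 / 6) ^ 5 * (n - 2) / (q + 3 * p)) :
    (n * (n - 1) * (n - 2))⁻¹ * (6 / 5) ^ 6 ≤ 2 / 5 / (k * (n * (n - 1)) * (q + 3 * p)) := by
  obtain ⟨hpq, hn⟩ := pos_and_two_lt_of_le hp hq hk hkle
  have hn1 : 0 < n - 1 := by linarith
  have hn2 : 0 < n - 2 := by linarith
  rw [inv_mul_eq_div, div_le_div_iff₀ (by positivity) (by positivity)]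
  rw [le_div_iff₀ hpq] at hkle
  have : 0 ≤ n * (n - 1) := by positivity
  nlinarith [mul_le_mul_of_nonneg_left hkle this]

lemma weight_mul_add_weight_mul (hp : 0 ≤ p) (hq : 0 ≤ q) (hk : 0 < k)
    (hkle : k ≤ 1 / 3 * (5 / 6) ^ 5 * (n - 2) / (q + 3 * p)) :
    2 / 5 / (k * (n * (n - 1)) * (q + 3 * p)) * (q * (k * (n * (n - 1)))) +
      2 / 5 / (k * (n * (n - 1)) * (q + 3 * p)) * (3 * p * (k * (n * (n - 1)))) = 2 / 5 := by
  obtain ⟨hpq, hn⟩ := pos_and_two_lt_of_le hp hq hk hkle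
  have : 0 < n - 1 := by linarith
  field_simp

lemma one_add_pow_three_mul_le {a b : ℝ} (ha : 0 ≤ a) (hb : 0 ≤ b) (hab : a + b = 2 / 5) :
    (1 + a) ^ 3 * (1 + b) ^ 3 ≤ (6 / 5) ^ 6 := by
  rw [← mul_pow, show (6 / 5 : ℝ) ^ 6 = ((6 / 5) ^ 2) ^ 3 by norm_num]
  gcongr
  nlinarith [sq_nonneg (a - b)]

end Arithmetic

lemma funext_fin_three {α : Type*} {d d' : Fin 3 → α} (h0 : d 0 = d' 0) (h1 : d 1 = d' 1)
    (h2 : d 2 = d' 2) : d = d' := by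
  funext i; fin_cases i <;> assumption

def LocallyBounded {V C : Type*} (χ : Sym2 V → C) (k : ℕ) : Prop :=
  ∀ (v : V) (c : C), {u : V | u ≠ v ∧ χ s(v, u) = c}.ncard ≤ k

variable {n : ℕ}

lemma mem_cherrySet {G : SimpleGraph (Fin n)} {x y z : Fin n} (hxy : G.Adj x y) (hxz : G.Adj x z)
    (hyz : y ≠ z) : ¬ s(y, z).IsDiag ∧ ∀ w ∈ s(y, z), G.Adj x w := by
  refine ⟨Sym2.mk_isDiag_iff.not.2 hyz, fun w hw => ?_⟩
  rcases Sym2.mem_iff.1 hw with rfl | rfl <;> assumption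

section Cherries

variable (G : SimpleGraph (Fin n)) [DecidableRel G.Adj]

def cherryMaps : Finset (Fin 3 → Fin n) := {d | G.Adj (d 0) (d 1) ∧ G.Adj (d 0) (d 2) ∧ d 1 < d 2}

lemma card_filter_cherryMaps_le_ncard (R : (Fin 3 → Fin n) → Prop) [DecidablePred R]
    {X : Set (Fin n × Sym2 (Fin n))}
    (hX : ∀ d, G.Adj (d 0) (d 1) → G.Adj (d 0) (d 2) → d 1 ≠ d 2 → R d → (d 0, s(d 1, d 2)) ∈ X) :
    #{d ∈ cherryMaps G | R d} ≤ X.ncard := by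
  rw [← Set.ncard_coe_finset]
  refine Set.ncard_le_ncard_of_injOn (fun d => (d 0, s(d 1, d 2))) (fun d hd => ?_) ?_
    (Set.toFinite X)
  · simp only [cherryMaps, mem_coe, mem_filter, mem_univ, true_and] at hd
    exact hX d hd.1.1 hd.1.2.1 hd.1.2.2.ne hd.2
  · intro d hd d' hd' h
    simp only [cherryMaps, mem_coe, mem_filter, mem_univ, true_and] at hd hd'
    simp only [Prod.mk.injEq, Sym2.eq_iff] at h
    obtain ⟨h0, ⟨h1, h2⟩ | ⟨h1, h2⟩⟩ := h
    · exact funext_fin_three h0 h1 h2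
    · rw [h1, h2] at hd
      exact absurd hd.1.2.2 (asymm hd'.1.2.2)

end Cherries

section Monochromatic

variable {C : Type*} [DecidableEq C] {χ : Sym2 (Fin n) → C} {k : ℕ}

variable (χ) in
def monoMaps : Finset (Fin 3 → Fin n) := {r | Injective r ∧ χ s(r 0, r 1) = χ s(r 0, r 2)}

lemma card_colourNeighbours_le (hχ : LocallyBounded χ k) (a : Fin n) (c : C) :
    #{v | v ≠ a ∧ χ s(a, v) = c} ≤ k := by
  have := hχ a c
  rwa [Set.ncard_eq_toFinset_card', Set.toFinset_ofPred] at this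

lemma card_monoMaps_fibre_one_le (hχ : LocallyBounded χ k) (a u : Fin n) :
    #{r ∈ monoMaps χ | r 0 = a ∧ r 1 = u} ≤ k := by
  refine (card_le_card_of_injOn (· 2) (fun r hr => ?_) fun r hr r' hr' h => ?_).trans
    (card_colourNeighbours_le hχ a (χ s(a, u)))
  · simp only [monoMaps, mem_coe, mem_filter, mem_univ, true_and] at hr ⊢
    obtain ⟨⟨hinj, hcol⟩, rfl, rfl⟩ := hr
    exact ⟨hinj.ne (by decide), hcol.symm⟩
  · simp only [monoMaps, mem_coe, mem_filter, mem_univ, true_and] at hr hr'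
    exact funext_fin_three (hr.2.1.trans hr'.2.1.symm) (hr.2.2.trans hr'.2.2.symm) h

lemma card_monoMaps_fibre_two_le (hχ : LocallyBounded χ k) (a v : Fin n) :
    #{r ∈ monoMaps χ | r 0 = a ∧ r 2 = v} ≤ k := by
  refine (card_le_card_of_injOn (· 1) (fun r hr => ?_) fun r hr r' hr' h => ?_).trans
    (card_colourNeighbours_le hχ a (χ s(a, v)))
  · simp only [monoMaps, mem_coe, mem_filter, mem_univ, true_and] at hr ⊢
    obtain ⟨⟨hinj, hcol⟩, rfl, rfl⟩ := hr
    exact ⟨hinj.ne (by decide), hcol⟩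
  · simp only [monoMaps, mem_coe, mem_filter, mem_univ, true_and] at hr hr'
    exact funext_fin_three (hr.2.1.trans hr'.2.1.symm) h (hr.2.2.trans hr'.2.2.symm)

lemma card_monoMaps_le (hχ : LocallyBounded χ k) : #(monoMaps χ) ≤ k * (n * n - n) := by
  have hmaps : ∀ r ∈ monoMaps χ, (r 0, r 1) ∈ (univ : Finset (Fin n)).offDiag := by
    intro r hr
    simp only [monoMaps, mem_filter, mem_univ, true_and, mem_offDiag] at hr ⊢
    exact hr.1.ne (by decide)
  have h := card_le_mul_card_image_of_maps_to hmaps k fun au _ => by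
    simpa only [Prod.ext_iff] using card_monoMaps_fibre_one_le hχ au.1 au.2
  rwa [offDiag_card, card_univ, Fintype.card_fin] at h

lemma card_monoMaps_apply_eq_le {i j : Fin 3} (hij : i ≠ j) (b : Fin n)
    (hfibre : ∀ c, #{r ∈ monoMaps χ | r j = b ∧ r i = c} ≤ k) :
    #{r ∈ monoMaps χ | r j = b} ≤ k * (n - 1) := by
  have hmaps : ∀ r ∈ {r ∈ monoMaps χ | r j = b}, r i ∈ univ.erase b := by
    intro r hr
    simp only [monoMaps, mem_filter, mem_univ, true_and] at hr
    exact mem_erase.2 ⟨hr.2 ▸ hr.1.1.ne hij, mem_univ _⟩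
  have h := card_le_mul_card_image_of_maps_to hmaps k fun c _ => by
    simpa only [filter_filter] using hfibre c
  rwa [card_erase_of_mem (mem_univ b), card_univ, Fintype.card_fin] at h

lemma card_monoMaps_mem_le (hχ : LocallyBounded χ k) (b : Fin n) :
    #{r ∈ monoMaps χ | b ∈ univ.image r} ≤ 3 * (k * (n - 1)) := by
  have h0 := card_monoMaps_apply_eq_le (i := 1) (j := 0) (by decide) b fun c =>
    card_monoMaps_fibre_one_le hχ b c
  have h1 := card_monoMaps_apply_eq_le (i := 0) (j := 1) (by decide) b fun c => by
    simpa only [and_comm] using card_monoMaps_fibre_one_le hχ c b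
  have h2 := card_monoMaps_apply_eq_le (i := 0) (j := 2) (by decide) b fun c => by
    simpa only [and_comm] using card_monoMaps_fibre_two_le hχ c b
  have hsub : {r ∈ monoMaps χ | b ∈ univ.image r} ⊆
      {r ∈ monoMaps χ | r 0 = b} ∪ {r ∈ monoMaps χ | r 1 = b} ∪ {r ∈ monoMaps χ | r 2 = b} := by
    intro r
    simp only [mem_filter, mem_image, mem_univ, true_and, mem_union]
    rintro ⟨hr, j, rfl⟩
    fin_cases j <;> simp [hr]
  have := card_le_card hsub
  have := card_union_le ({r ∈ monoMaps χ | r 0 = b} ∪ {r ∈ monoMaps χ | r 1 = b})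
    {r ∈ monoMaps χ | r 2 = b}
  have := card_union_le {r ∈ monoMaps χ | r 0 = b} {r ∈ monoMaps χ | r 1 = b}
  omega

end Monochromatic

section Criterion

variable {C : Type*} [DecidableEq C] {G : SimpleGraph (Fin n)} [DecidableRel G.Adj]
  {χ : Sym2 (Fin n) → C} {k : ℕ} {p q m : ℝ}

lemma cliqueFactor_inl_le (hm : 0 ≤ m) (hχ : LocallyBounded χ k)
    (hvertex : ∀ v : Fin n,
      ({c : Fin n × Sym2 (Fin n) |
          (¬ c.2.IsDiag ∧ ∀ x ∈ c.2, G.Adj c.1 x) ∧ (v = c.1 ∨ v ∈ c.2)}.ncard : ℝ) ≤ q)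
    (w : Fin n) :
    cliqueFactor pinSlots (cherryMaps G ×ˢ monoMaps χ) m (Sum.inl w) ≤
      1 + m * (q * (k * (n * (n - 1)))) := by
  have hG : (#{d ∈ cherryMaps G | w ∈ univ.image d} : ℝ) ≤ q := by
    refine (Nat.cast_le.2 (card_filter_cherryMaps_le_ncard G _ fun d h01 h02 h12 hw => ?_)).trans
      (hvertex w)
    refine ⟨mem_cherrySet h01 h02 h12, ?_⟩
    obtain ⟨j, -, rfl⟩ := mem_image.1 hw
    fin_cases j <;> simp
  have hM : (#(monoMaps χ) : ℝ) ≤ k * (n * (n - 1)) := by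
    have := Nat.cast_le (α := ℝ).2 (card_monoMaps_le hχ)
    rwa [Nat.cast_mul, Nat.cast_sub (Nat.le_mul_self n), Nat.cast_mul, ← mul_sub_one] at this
  rw [cliqueFactor, filter_inl_mem_pinSlots_product, card_product, Nat.cast_mul]
  exact add_le_add_right (mul_le_mul_of_nonneg_left
    (mul_le_mul hG hM (Nat.cast_nonneg _) ((Nat.cast_nonneg _).trans hG)) hm) 1

lemma cliqueFactor_inr_le (hm : 0 ≤ m) (hχ : LocallyBounded χ k)
    (hcherries :
      ({c : Fin n × Sym2 (Fin n) | ¬ c.2.IsDiag ∧ ∀ x ∈ c.2, G.Adj c.1 x}.ncard : ℝ) ≤ p * n)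
    (b : Fin n) :
    cliqueFactor pinSlots (cherryMaps G ×ˢ monoMaps χ) m (Sum.inr b) ≤
      1 + m * (3 * p * (k * (n * (n - 1)))) := by
  have hG : (#(cherryMaps G) : ℝ) ≤ p * n := by
    refine (Nat.cast_le.2 ?_).trans hcherries
    simpa using card_filter_cherryMaps_le_ncard G (fun _ => True) fun d h01 h02 h12 _ =>
      mem_cherrySet h01 h02 h12
  have hM : (#{r ∈ monoMaps χ | b ∈ univ.image r} : ℝ) ≤ 3 * (k * (n - 1)) := by
    have := Nat.cast_le (α := ℝ).2 (card_monoMaps_mem_le hχ b)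
    rwa [Nat.cast_mul, Nat.cast_mul, Nat.cast_pred b.pos, Nat.cast_ofNat] at this
  rw [cliqueFactor, filter_inr_mem_pinSlots_product, card_product, Nat.cast_mul]
  refine add_le_add_right (mul_le_mul_of_nonneg_left ?_ hm) 1
  calc _ ≤ p * n * (3 * (k * (n - 1))) :=
        mul_le_mul hG hM (Nat.cast_nonneg _) ((Nat.cast_nonneg _).trans hG)
    _ = 3 * p * (k * (n * (n - 1))) := by ring

theorem pinned_clique_criterion (hp : 0 ≤ p) (hq : 0 ≤ q) (hk : 0 < k) (hχ : LocallyBounded χ k)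
    (hcherries :
      ({c : Fin n × Sym2 (Fin n) | ¬ c.2.IsDiag ∧ ∀ x ∈ c.2, G.Adj c.1 x}.ncard : ℝ) ≤ p * n)
    (hvertex : ∀ v : Fin n,
      ({c : Fin n × Sym2 (Fin n) |
          (¬ c.2.IsDiag ∧ ∀ x ∈ c.2, G.Adj c.1 x) ∧ (v = c.1 ∨ v ∈ c.2)}.ncard : ℝ) ≤ q)
    (hkle : (k : ℝ) ≤ 1 / 3 * (5 / 6) ^ 5 * ((n : ℝ) - 2) / (q + 3 * p))
    (hm : m = 2 / 5 / (k * (n * (n - 1)) * (q + 3 * p))) (e : (Fin 3 → Fin n) × (Fin 3 → Fin n)) :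
    (Fintype.card (Fin 3 ↪ Fin n) : ℝ)⁻¹ *
      ∏ s ∈ pinSlots e, cliqueFactor pinSlots (cherryMaps G ×ˢ monoMaps χ) m s ≤ m := by
  have hk' : (0 : ℝ) < k := Nat.cast_pos.2 hk
  obtain ⟨hpq, hn⟩ := pos_and_two_lt_of_le hp hq hk' hkle
  have hN : 0 < (k : ℝ) * (n * (n - 1)) := by
    have : (0 : ℝ) < n - 1 := by linarith
    positivity
  have hm0 : 0 < m := hm ▸ weight_pos hp hq hk' hkle
  have hab := hm ▸ weight_mul_add_weight_mul hp hq hk' hkle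
  set a := m * (q * (k * (n * (n - 1))))
  set b := m * (3 * p * (k * (n * (n - 1))))
  have ha : 0 ≤ a := mul_nonneg hm0.le (mul_nonneg hq hN.le)
  have hb : 0 ≤ b := mul_nonneg hm0.le (mul_nonneg (by positivity) hN.le)
  have hembed : (Fintype.card (Fin 3 ↪ Fin n) : ℝ) = n * (n - 1) * (n - 2) := by
    rw [Fintype.card_embedding_eq, Fintype.card_fin, Fintype.card_fin]
    rcases n with _ | _ | _ | n <;> simp [Nat.descFactorial_succ]
    ring
  calc _ ≤ (Fintype.card (Fin 3 ↪ Fin n) : ℝ)⁻¹ * ((1 + a) ^ 3 * (1 + b) ^ 3) := by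
        refine mul_le_mul_of_nonneg_left ?_ (by positivity)
        refine (prod_pinSlots_le (fun s => (cliqueFactor_pos hm0.le s).le) (by linarith)
          (by linarith) (cliqueFactor_inl_le hm0.le hχ hvertex)
          (cliqueFactor_inr_le hm0.le hχ hcherries) e).trans_eq ?_
        rw [Fintype.card_fin]
    _ ≤ (Fintype.card (Fin 3 ↪ Fin n) : ℝ)⁻¹ * (6 / 5) ^ 6 :=
        mul_le_mul_of_nonneg_left (one_add_pow_three_mul_le ha hb hab) (by positivity)
    _ ≤ m := by
        rw [hembed, hm]
        exact inv_mul_le_weight hp hq hk' hkle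

lemma weight_lt_one (hp : 0 ≤ p) (hq : 0 ≤ q) (hk : 0 < k) (hχ : LocallyBounded χ k)
    (hvertex : ∀ v : Fin n,
      ({c : Fin n × Sym2 (Fin n) |
          (¬ c.2.IsDiag ∧ ∀ x ∈ c.2, G.Adj c.1 x) ∧ (v = c.1 ∨ v ∈ c.2)}.ncard : ℝ) ≤ q)
    (hkle : (k : ℝ) ≤ 1 / 3 * (5 / 6) ^ 5 * ((n : ℝ) - 2) / (q + 3 * p))
    (hm : m = 2 / 5 / (k * (n * (n - 1)) * (q + 3 * p)))
    {e₀ : (Fin 3 → Fin n) × (Fin 3 → Fin n)} (he₀ : e₀ ∈ cherryMaps G ×ˢ monoMaps χ) : m < 1 := by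
  have hk' : (0 : ℝ) < k := Nat.cast_pos.2 hk
  have hm0 : 0 < m := hm ▸ weight_pos hp hq hk' hkle
  have hsum := hm ▸ weight_mul_add_weight_mul hp hq hk' hkle
  have hn := (pos_and_two_lt_of_le hp hq hk' hkle).2
  have hn1 : (0 : ℝ) ≤ n - 1 := by linarith
  have hb : 0 ≤ m * (3 * p * (k * (n * (n - 1)))) := by positivity
  have hslot : (1 : ℝ) ≤ #{e ∈ cherryMaps G ×ˢ monoMaps χ | Sum.inl (e₀.1 0) ∈ pinSlots e} := by
    exact_mod_cast card_pos.2 ⟨e₀, mem_filter.2 ⟨he₀, by simp [pinSlots]⟩⟩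
  have hinl := cliqueFactor_inl_le hm0.le hχ hvertex (e₀.1 0)
  rw [cliqueFactor] at hinl
  have := mul_le_mul_of_nonneg_left hslot hm0.le
  linarith

lemma ne_of_forall_notMem_pinned {σ : Perm (Fin n)}
    (hσ : ∀ e ∈ cherryMaps G ×ˢ monoMaps χ, σ ∉ pinned e) {x y z : Fin n} (hxy : G.Adj x y)
    (hxz : G.Adj x z) (hyz : y < z) : χ s(σ x, σ y) ≠ χ s(σ x, σ z) := by
  intro hcol
  set d : Fin 3 → Fin n := ![x, y, z]
  have hd : Injective d := by
    intro i j h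
    fin_cases i <;> fin_cases j <;> simp_all [d, hxy.ne, hxz.ne, hyz.ne, eq_comm]
  refine hσ (d, σ ∘ d) (mem_product.2 ⟨?_, ?_⟩) (by simp [pinned])
  · simp [cherryMaps, d, hxy, hxz, hyz]
  · simp [monoMaps, d, σ.injective.comp hd, hcol]

end Criterion

end ProperCopy

open CliqueLLL ProperCopy

/-- **Theorem 3** (Böttcher–Kohayakawa–Procacci).
Let `G` be a graph on `n` vertices containing at most `p·n` cherries (a cherry is a pair of
distinct edges sharing a vertex, encoded here as a pair `(y, s(x,z))` of a middle vertex
together with the unordered pair of the two distinct outer vertices), such that each vertex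
of `G` is contained in at most `q` cherries.  If `k` is a positive integer with
`k ≤ (1/3)·(5/6)^5·(n−2)/(q+3p)`, then every locally `k`-bounded edge colouring `χ` of the
complete graph `K_n` contains a properly coloured copy of `G`. -/
theorem properly_coloured_copy_of_graph_with_few_cherries
    {n : ℕ} {C : Type*} (G : SimpleGraph (Fin n)) (p q : ℝ) (hp : 0 < p) (hq : 0 < q)
    (hcherries :
      ({c : Fin n × Sym2 (Fin n) | ¬ c.2.IsDiag ∧ ∀ x ∈ c.2, G.Adj c.1 x}.ncard : ℝ) ≤ p * n)
    (hvertex : ∀ v : Fin n,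
      ({c : Fin n × Sym2 (Fin n) |
          (¬ c.2.IsDiag ∧ ∀ x ∈ c.2, G.Adj c.1 x) ∧ (v = c.1 ∨ v ∈ c.2)}.ncard : ℝ) ≤ q)
    (k : ℕ) (hk : 0 < k)
    (hkle : (k : ℝ) ≤ (1/3) * (5/6)^5 * ((n : ℝ) - 2) / (q + 3 * p))
    (χ : Sym2 (Fin n) → C)
    (hχ : ∀ (v : Fin n) (c : C), {u : Fin n | u ≠ v ∧ χ s(v, u) = c}.ncard ≤ k) :
    ∃ σ : Fin n ↪ Fin n, ∀ x y z : Fin n, G.Adj x y → G.Adj x z → y ≠ z →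
      χ s(σ x, σ y) ≠ χ s(σ x, σ z) := by
  classical
  set m : ℝ := 2 / 5 / (k * (n * (n - 1)) * (q + 3 * p)) with hm
  obtain ⟨σ, hσ⟩ : ∃ σ : Perm (Fin n), ∀ e ∈ cherryMaps G ×ˢ monoMaps χ, σ ∉ pinned e := by
    rcases (cherryMaps G ×ˢ monoMaps χ).eq_empty_or_nonempty with hT | ⟨e₀, he₀⟩
    · exact ⟨1, by simp [hT]⟩
    exact exists_forall_notMem_of_clique_criterion pinSlots pinned _ (by positivity)
      (weight_pos hp.le hq.le (Nat.cast_pos.2 hk) hkle).le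
      (weight_lt_one hp.le hq.le hk hχ hvertex hkle hm he₀)
      (fun e _ => pinned_clique_criterion hp.le hq.le hk hχ hcherries hvertex hkle hm e)
      fun e he Y _ hY => card_pinned_inter_avoiding_le e
        (mem_filter.1 (mem_product.1 he).2).2.1 Y hY
  refine ⟨σ.toEmbedding, fun x y z hxy hxz hyz => ?_⟩
  rcases hyz.lt_or_gt with h | h
  · exact ne_of_forall_notMem_pinned hσ hxy hxz h
  · exact (ne_of_forall_notMem_pinned hσ hxz hxy h).symm
end

section
/- Let G be a graph on n vertices with maximum degree Δ > 0. If k is a positive integer with k ≤ (n−2)/(22.4·Δ²), then every locally k-bounded edge colouring of the complete graph K_n contains a copy of G that is properly coloured, i.e., there is an injection σ: V(G) → V(K_n) such that any two edges of G sharing a vertex are mapped by σ to edges of K_n receiving different colours. -/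
/-!
Take `σ` to be a uniformly random permutation of the vertices. The bad events are
`σ (x, y, z) = (a, b, c)` for a cherry `y - x - z` of `G` and a triple with `χ ab = χ ac`; each
lives on six slots (`x, y, z` as positions, `a, b, c` as values). A switching argument shows that,
conditioned on avoiding any family of bad events on slots disjoint from those of `τ`, the event
`τ` has probability at most `1 / n (n - 1) (n - 2)`. Since a slot lies on at most
`(3 / 2) Δ² k n (n - 1)` bad events, a lopsided local lemma in which the dependencies are grouped
by slot, run with the ratio `6 / 5`, makes the probability of avoiding every bad event positive.
All probabilities are expressed by counting permutations.
-/

open Finset Fintype Function Equiv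

theorem Equiv.Perm.exists_apply_eq_and_apply_eq_self {κ α : Type*} [Finite κ] [DecidableEq α]
    (u v : κ → α) (hu : Injective u) (hv : Injective v) :
    ∃ π : Perm α, (∀ i, π (u i) = v i) ∧
      ∀ w, w ∉ Set.range u → w ∉ Set.range v → π w = w := by
  set U : Set α := Set.range u ∪ Set.range v
  have : Finite U := Set.finite_union.2 ⟨Set.finite_range u, Set.finite_range v⟩ |>.to_subtype
  obtain ⟨ρ, hρ⟩ := Perm.exists_extending_pair (fun i => (⟨u i, .inl ⟨i, rfl⟩⟩ : U))
    (fun i => (⟨v i, .inr ⟨i, rfl⟩⟩ : U))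
    (fun i j h => hu (congrArg Subtype.val h)) (fun i j h => hv (congrArg Subtype.val h))
  classical
  refine ⟨Perm.ofSubtype ρ, fun i => ?_, fun w hwu hwv => ?_⟩
  · rw [Perm.ofSubtype_apply_of_mem ρ (.inl ⟨i, rfl⟩), hρ]
  · exact Perm.ofSubtype_apply_of_not_mem ρ (by rintro (h | h) <;> contradiction)

section Avoiding

variable {Ω ι : Type*} [Fintype Ω] [DecidableEq Ω]

def avoiding (A : ι → Finset Ω) (T : Finset ι) : Finset Ω := univ \ T.biUnion A

@[simp]
lemma mem_avoiding {A : ι → Finset Ω} {T : Finset ι} {ω : Ω} :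
    ω ∈ avoiding A T ↔ ∀ B ∈ T, ω ∉ A B := by
  simp [avoiding]

lemma avoiding_anti {A : ι → Finset Ω} {T T' : Finset ι} (h : T ⊆ T') :
    avoiding A T' ⊆ avoiding A T :=
  sdiff_subset_sdiff subset_rfl (biUnion_subset_biUnion_of_subset_left A h)

end Avoiding

section LocalLemma

variable {Ω ι β : Type*} [Fintype Ω] [DecidableEq Ω] [DecidableEq ι] [DecidableEq β]
  {A : ι → Finset Ω} {slots : ι → Finset β} {E : Finset ι} {c d p q : ℕ}

lemma pow_mul_le_pow_mul_of_le {x y j k : ℕ} (hpq : p ≤ q) (hjk : j ≤ k)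
    (h : p ^ j * x ≤ q ^ j * y) : p ^ k * x ≤ q ^ k * y := by
  rw [← Nat.sub_add_cancel hjk, pow_add, pow_add, mul_assoc, mul_assoc]
  exact Nat.mul_le_mul (Nat.pow_le_pow_left hpq _) h

lemma mul_card_avoiding_le (hpq : p ≤ q) (hp : 0 < p) (hc : 0 < c)
    (hclique : ∀ s, q ^ (d + 1) * #{B ∈ E | s ∈ slots B} ≤ (q - p) * p ^ d * c)
    {U V : Finset ι} (hUV : U ⊆ V) (hV : V ⊆ E) (s : β) (hVU : ∀ B ∈ V \ U, s ∈ slots B)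
    (hB : ∀ B ∈ V \ U, p ^ d * c * #(avoiding A U ∩ A B) ≤ q ^ d * #(avoiding A U)) :
    p * #(avoiding A U) ≤ q * #(avoiding A V) := by
  set X := #(avoiding A U)
  set S := ∑ B ∈ V \ U, #(avoiding A U ∩ A B)
  have hcover : X ≤ #(avoiding A V) + S := by
    have : avoiding A U \ avoiding A V ⊆ (V \ U).biUnion (fun B => avoiding A U ∩ A B) := by
      intro ω hω
      obtain ⟨hωU, hωV⟩ := mem_sdiff.1 hω
      obtain ⟨B, hBV, hωB⟩ : ∃ B ∈ V, ω ∈ A B := by simpa using hωV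
      have hBU : B ∉ U := fun hBU => mem_avoiding.1 hωU B hBU hωB
      exact mem_biUnion.2 ⟨B, mem_sdiff.2 ⟨hBV, hBU⟩, mem_inter.2 ⟨hωU, hωB⟩⟩
    have := (card_le_card this).trans card_biUnion_le
    have := card_sdiff_add_card_eq_card (avoiding_anti (A := A) hUV)
    omega
  have hnum : #(V \ U) ≤ #{B ∈ E | s ∈ slots B} :=
    card_le_card fun B hB => mem_filter.2 ⟨hV (mem_sdiff.1 hB).1, hVU B hB⟩
  have hsum : p ^ d * c * S ≤ #(V \ U) * (q ^ d * X) := by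
    rw [mul_sum, ← smul_eq_mul (#(V \ U)), ← sum_const]
    exact sum_le_sum hB
  have hS : q * S ≤ (q - p) * X := by
    refine Nat.le_of_mul_le_mul_left ?_ (by positivity : 0 < p ^ d * c)
    calc p ^ d * c * (q * S) = q * (p ^ d * c * S) := by ring
      _ ≤ q * (#(V \ U) * (q ^ d * X)) := Nat.mul_le_mul_left q hsum
      _ = q ^ (d + 1) * #(V \ U) * X := by ring
      _ ≤ (q - p) * p ^ d * c * X :=
        Nat.mul_le_mul_right X ((Nat.mul_le_mul_left _ hnum).trans (hclique s))
      _ = p ^ d * c * ((q - p) * X) := by ring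
  have : p * X + (q - p) * X = q * X := by rw [← add_mul, Nat.add_sub_cancel' hpq]
  linarith [Nat.mul_le_mul_left q hcover]

lemma pow_card_mul_card_avoiding_le (hpq : p ≤ q) (hp : 0 < p) (hc : 0 < c)
    (hslots : ∀ τ ∈ E, #(slots τ) ≤ d + 1)
    (hclique : ∀ s, q ^ (d + 1) * #{B ∈ E | s ∈ slots B} ≤ (q - p) * p ^ d * c)
    {T : Finset ι} (hT : T ⊆ E)
    (ih : ∀ U ⊂ T, ∀ B ∈ E, #(slots B ∩ U.biUnion slots) ≤ d →
      p ^ d * c * #(avoiding A U ∩ A B) ≤ q ^ d * #(avoiding A U))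
    (R : Finset β) :
    p ^ #R * #(avoiding A {B ∈ T | Disjoint (slots B) R}) ≤ q ^ #R * #(avoiding A T) := by
  induction R using Finset.induction_on with
  | empty => simp
  | insert s R hsR ihR =>
    set U := {B ∈ T | Disjoint (slots B) (insert s R)}
    set V := {B ∈ T | Disjoint (slots B) R}
    have hUV : U ⊆ V := fun B hB => by
      simp only [U, V, mem_filter, disjoint_insert_right] at hB ⊢
      exact ⟨hB.1, hB.2.2⟩
    have hVU : ∀ B ∈ V \ U, s ∈ slots B := by
      intro B hB
      simp only [U, V, mem_sdiff, mem_filter, disjoint_insert_right] at hB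
      tauto
    have hstep : p * #(avoiding A U) ≤ q * #(avoiding A V) := by
      refine mul_card_avoiding_le hpq hp hc hclique hUV ((filter_subset _ T).trans hT) s hVU
        fun B hB => ?_
      obtain ⟨hBV, hBU⟩ := mem_sdiff.1 hB
      have hBT : B ∈ T := (mem_filter.1 hBV).1
      have hUT : U ⊂ T := filter_ssubset.2 ⟨B, hBT, fun h => hBU (mem_filter.2 ⟨hBT, h⟩)⟩
      have hshared : slots B ∩ U.biUnion slots ⊆ (slots B).erase s := by
        intro u hu
        obtain ⟨huB, huU⟩ := mem_inter.1 hu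
        obtain ⟨B', hB'U, huB'⟩ := mem_biUnion.1 huU
        refine mem_erase.2 ⟨?_, huB⟩
        rintro rfl
        exact disjoint_left.1 (mem_filter.1 hB'U).2 huB' (mem_insert_self _ R)
      refine ih U hUT B (hT hBT) ?_
      have := card_le_card hshared
      have := hslots B (hT hBT)
      rw [card_erase_of_mem (hVU B hB)] at *
      omega
    rw [card_insert_of_notMem hsR]
    calc p ^ (#R + 1) * #(avoiding A U) = p ^ #R * (p * #(avoiding A U)) := by ring
      _ ≤ p ^ #R * (q * #(avoiding A V)) := Nat.mul_le_mul_left _ hstep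
      _ = q * (p ^ #R * #(avoiding A V)) := by ring
      _ ≤ q * (q ^ #R * #(avoiding A T)) := Nat.mul_le_mul_left q ihR
      _ = q ^ (#R + 1) * #(avoiding A T) := by ring

/-- Read probabilistically: given that no event of `T` occurs, `τ` occurs with probability at most
`(q / p) ^ k / c`, where `k` bounds the number of slots `τ` shares with `T`. -/
theorem pow_mul_card_avoiding_inter_le (hpq : p ≤ q) (hp : 0 < p) (hc : 0 < c)
    (hslots : ∀ τ ∈ E, #(slots τ) ≤ d + 1)
    (hclique : ∀ s, q ^ (d + 1) * #{B ∈ E | s ∈ slots B} ≤ (q - p) * p ^ d * c)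
    (hswitch : ∀ τ ∈ E, ∀ S : Finset ι, (∀ B ∈ S, Disjoint (slots B) (slots τ)) →
      c * #(avoiding A S ∩ A τ) ≤ #(avoiding A S))
    (T : Finset ι) (hT : T ⊆ E) (τ : ι) (hτ : τ ∈ E) (k : ℕ)
    (hk : #(slots τ ∩ T.biUnion slots) ≤ k) :
    p ^ k * c * #(avoiding A T ∩ A τ) ≤ q ^ k * #(avoiding A T) := by
  induction T using Finset.strongInduction generalizing τ k with
  | H T ih =>
  set R := slots τ ∩ T.biUnion slots
  set S := {B ∈ T | Disjoint (slots B) R}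
  have hS : ∀ B ∈ S, Disjoint (slots B) (slots τ) := by
    intro B hB
    refine disjoint_left.2 fun u huB huτ => disjoint_left.1 (mem_filter.1 hB).2 huB ?_
    exact mem_inter.2 ⟨huτ, mem_biUnion.2 ⟨B, (mem_filter.1 hB).1, huB⟩⟩
  have hchain := pow_card_mul_card_avoiding_le (A := A) hpq hp hc hslots hclique hT
    (fun U hU B hB hB' => ih U hU (hU.subset.trans hT) B hB d hB') R
  rw [mul_assoc]
  refine pow_mul_le_pow_mul_of_le hpq hk ?_
  calc p ^ #R * (c * #(avoiding A T ∩ A τ))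
      ≤ p ^ #R * (c * #(avoiding A S ∩ A τ)) := by
        exact Nat.mul_le_mul_left _ (Nat.mul_le_mul_left _
          (card_le_card (inter_subset_inter_right (avoiding_anti (filter_subset _ T)))))
    _ ≤ p ^ #R * #(avoiding A S) := Nat.mul_le_mul_left _ (hswitch τ hτ S hS)
    _ ≤ q ^ #R * #(avoiding A T) := hchain

theorem exists_forall_notMem_of_switching [Nonempty Ω] (hpq : p ≤ q)
    (hslots : ∀ τ ∈ E, #(slots τ) ≤ d + 1)
    (hclique : ∀ s, q ^ (d + 1) * #{B ∈ E | s ∈ slots B} ≤ (q - p) * p ^ d * c)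
    (hswitch : ∀ τ ∈ E, ∀ S : Finset ι, (∀ B ∈ S, Disjoint (slots B) (slots τ)) →
      c * #(avoiding A S ∩ A τ) ≤ #(avoiding A S))
    (hpos : q ^ (d + 1) < p ^ (d + 1) * c) :
    ∃ ω, ∀ τ ∈ E, ω ∉ A τ := by
  have hp : 0 < p := Nat.pos_of_ne_zero (by rintro rfl; simp at hpos)
  have hc : 0 < c := Nat.pos_of_ne_zero (by rintro rfl; simp at hpos)
  suffices ∀ T ⊆ E, (avoiding A T).Nonempty by
    obtain ⟨ω, hω⟩ := this E subset_rfl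
    exact ⟨ω, mem_avoiding.1 hω⟩
  intro T
  induction T using Finset.induction_on with
  | empty => exact fun _ => ⟨Classical.arbitrary Ω, by simp⟩
  | insert τ T hτT ihT =>
    intro hT
    have hτ : τ ∈ E := hT (mem_insert_self τ T)
    have hTE : T ⊆ E := (subset_insert τ T).trans hT
    have hpos' := card_pos.2 (ihT hTE)
    have hbound := pow_mul_card_avoiding_inter_le hpq hp hc hslots hclique hswitch T hTE τ hτ
      (d + 1) ((card_le_card inter_subset_left).trans (hslots τ hτ))
    have hlt : #(avoiding A T ∩ A τ) < #(avoiding A T) := by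
      by_contra! h
      nlinarith [Nat.mul_le_mul_left (p ^ (d + 1) * c) h]
    obtain ⟨ω, hωT, hωτ⟩ := exists_mem_notMem_of_card_lt_card hlt
    exact ⟨ω, mem_avoiding.2 fun B hB => by
      rcases mem_insert.1 hB with rfl | hB
      · exact fun h => hωτ (mem_inter.2 ⟨hωT, h⟩)
      · exact mem_avoiding.1 hωT B hB⟩

end LocalLemma

namespace PermTuple

variable {κ α : Type*} [Fintype κ] [DecidableEq α]

def slots (B : (κ → α) × (κ → α)) : Finset (α ⊕ α) :=
  (univ.image B.1).disjSum (univ.image B.2)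

@[simp]
lemma inl_mem_slots {B : (κ → α) × (κ → α)} {v : α} :
    Sum.inl v ∈ slots B ↔ v ∈ univ.image B.1 :=
  inl_mem_disjSum

@[simp]
lemma inr_mem_slots {B : (κ → α) × (κ → α)} {v : α} :
    Sum.inr v ∈ slots B ↔ v ∈ univ.image B.2 :=
  inr_mem_disjSum

lemma card_slots_le (B : (κ → α) × (κ → α)) : #(slots B) ≤ 2 * card κ := by
  rw [slots, card_disjSum, two_mul, ← card_univ]
  exact add_le_add card_image_le card_image_le

lemma ne_of_disjoint_slots {B τ : (κ → α) × (κ → α)} (h : Disjoint (slots B) (slots τ))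
    (i j : κ) : B.1 i ≠ τ.1 j ∧ B.2 i ≠ τ.2 j := by
  constructor <;> intro hij
  · exact disjoint_left.1 h (by simp : Sum.inl (B.1 i) ∈ slots B) (by simp [hij])
  · exact disjoint_left.1 h (by simp : Sum.inr (B.2 i) ∈ slots B) (by simp [hij])

variable [Fintype α]

def event (B : (κ → α) × (κ → α)) : Finset (Perm α) := {σ | ∀ i, σ (B.1 i) = B.2 i}

@[simp]
lemma mem_event {B : (κ → α) × (κ → α)} {σ : Perm α} :
    σ ∈ event B ↔ ∀ i, σ (B.1 i) = B.2 i := by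
  simp [event]

/-- Switching: for every injective `e`, precomposing an occurrence `σ` of `τ` with a permutation
that carries `e` to `τ.1` and fixes everything else yields a permutation that still avoids `S`,
and `(σ, e)` can be read back from it. -/
theorem descFactorial_mul_card_avoiding_inter_le (τ : (κ → α) × (κ → α)) (hτ : Injective τ.1)
    (S : Finset ((κ → α) × (κ → α))) (hS : ∀ B ∈ S, Disjoint (slots B) (slots τ)) :
    (card α).descFactorial (card κ) * #(avoiding event S ∩ event τ) ≤ #(avoiding event S) := by
  choose π hπe hπfix using fun e : κ ↪ α =>
    Perm.exists_apply_eq_and_apply_eq_self e τ.1 e.injective hτ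
  set O := avoiding event S ∩ event τ
  set F : Perm α × (κ ↪ α) → Perm α := fun p => p.1 * π p.2
  have hF_at {σ : Perm α} {e : κ ↪ α} (hσ : (σ, e) ∈ O ×ˢ univ) (j : κ) :
      F (σ, e) (e j) = τ.2 j := by
    simp only [F, Perm.mul_apply, hπe]
    exact mem_event.1 (mem_inter.1 (mem_product.1 hσ).1).2 j
  have hmaps : ∀ p ∈ O ×ˢ univ, F p ∈ avoiding event S := by
    rintro ⟨σ, e⟩ hp
    refine mem_avoiding.2 fun B hB hFB => ?_
    refine mem_avoiding.1 (mem_inter.1 (mem_product.1 hp).1).1 B hB (mem_event.2 fun i => ?_)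
    have hFBi : F (σ, e) (B.1 i) = B.2 i := mem_event.1 hFB i
    have hBτ := ne_of_disjoint_slots (hS B hB) i
    by_cases hBe : B.1 i ∈ Set.range e
    · obtain ⟨j, hj⟩ := hBe
      rw [← hj, hF_at hp j] at hFBi
      exact absurd hFBi.symm (hBτ j).2
    · have hfix := hπfix e _ hBe fun ⟨j, hj⟩ => (hBτ j).1 hj.symm
      rwa [Perm.mul_apply, hfix] at hFBi
  have hinj : Set.InjOn F ↑(O ×ˢ (univ : Finset (κ ↪ α))) := by
    rintro ⟨σ, e⟩ hp ⟨σ', e'⟩ hp' hF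
    have he : e = e' := by
      ext j
      refine (F (σ', e')).injective ?_
      rw [← hF, hF_at hp, hF, hF_at hp']
    subst he
    exact Prod.ext (mul_right_cancel hF) rfl
  calc (card α).descFactorial (card κ) * #O = #(O ×ˢ (univ : Finset (κ ↪ α))) := by
        rw [card_product, card_univ, card_embedding_eq, mul_comm]
    _ ≤ #(avoiding event S) := card_le_card_of_injOn F hmaps hinj

end PermTuple

namespace Fin3Tuple

variable {V : Type*}

def swapTail (x : Fin 3 → V) : Fin 3 → V := x ∘ Equiv.swap 1 2

@[simp] lemma swapTail_zero (x : Fin 3 → V) : swapTail x 0 = x 0 := rfl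
@[simp] lemma swapTail_one (x : Fin 3 → V) : swapTail x 1 = x 2 := rfl
@[simp] lemma swapTail_two (x : Fin 3 → V) : swapTail x 2 = x 1 := rfl

lemma swapTail_injective : Function.Injective (swapTail (V := V)) := by
  intro x y h
  funext i
  fin_cases i
  exacts [congrFun h 0, congrFun h 2, congrFun h 1]

lemma image_swapTail [DecidableEq V] (x : Fin 3 → V) :
    univ.image (swapTail x) = univ.image x := by
  simp [swapTail, ← image_image, image_univ_equiv]

lemma card_piFinset_three (s t u : Finset V) : #(piFinset ![s, t, u]) = #s * #t * #u := by
  simp [card_piFinset, Fin.prod_univ_three, mul_assoc]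

lemma card_filter_mem_image_le [DecidableEq V] (s : Finset (Fin 3 → V)) (v : V) :
    #{x ∈ s | v ∈ univ.image x} ≤
      #{x ∈ s | x 0 = v} + #{x ∈ s | x 1 = v} + #{x ∈ s | x 2 = v} := by
  calc #{x ∈ s | v ∈ univ.image x}
      ≤ #({x ∈ s | x 0 = v} ∪ {x ∈ s | x 1 = v} ∪ {x ∈ s | x 2 = v}) := by
        refine card_le_card fun x hx => ?_
        simp only [mem_filter, mem_image, mem_univ, true_and, Fin.exists_fin_succ] at hx
        simp only [mem_union, mem_filter]
        grind
    _ ≤ _ := (card_union_le _ _).trans (Nat.add_le_add_right (card_union_le _ _) _)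

lemma card_filter_two_le {s : Finset (Fin 3 → V)} (hs : ∀ x ∈ s, swapTail x ∈ s)
    (P : V → Prop) [DecidablePred P] :
    #{x ∈ s | P (x 2)} ≤ #{x ∈ s | P (x 1)} :=
  card_le_card_of_injOn swapTail
    (fun x hx => by
      simp only [coe_filter, Set.mem_ofPred_eq] at hx ⊢
      exact ⟨hs x hx.1, hx.2⟩)
    swapTail_injective.injOn

lemma two_mul_card_filter_lt_le [LinearOrder V] {s : Finset (Fin 3 → V)}
    (hs : ∀ x ∈ s, swapTail x ∈ s) : 2 * #{x ∈ s | x 1 < x 2} ≤ #s := by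
  set F := {x ∈ s | x 1 < x 2}
  have hdisj : Disjoint F (F.image swapTail) := by
    refine disjoint_left.2 fun x hxF hx => ?_
    obtain ⟨y, hyF, rfl⟩ := mem_image.1 hx
    exact lt_asymm (mem_filter.1 hyF).2 (by simpa using (mem_filter.1 hxF).2)
  calc 2 * #F = #(F ∪ F.image swapTail) := by
        rw [card_union_of_disjoint hdisj, card_image_of_injective _ swapTail_injective, two_mul]
    _ ≤ #s := card_le_card <| union_subset (filter_subset _ s) fun x hx => by
        obtain ⟨y, hyF, rfl⟩ := mem_image.1 hx
        exact hs y (mem_filter.1 hyF).1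

end Fin3Tuple

section Cherries

open Fin3Tuple

variable {V : Type*} [Fintype V] (G : SimpleGraph V) [DecidableRel G.Adj] {Δ : ℕ}

def orderedCherries : Finset (Fin 3 → V) := {x | G.Adj (x 0) (x 1) ∧ G.Adj (x 0) (x 2)}

lemma swapTail_mem_orderedCherries :
    ∀ x ∈ orderedCherries G, swapTail x ∈ orderedCherries G := by
  intro x hx
  simp only [orderedCherries, mem_filter, mem_univ, true_and] at hx ⊢
  exact ⟨hx.2, hx.1⟩

section DecidableEq

variable [DecidableEq V]

lemma card_orderedCherries_filter_zero_le (hdeg : ∀ v, G.degree v ≤ Δ) (v : V) :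
    #{x ∈ orderedCherries G | x 0 = v} ≤ Δ ^ 2 := by
  calc #{x ∈ orderedCherries G | x 0 = v}
      ≤ #(piFinset ![{v}, G.neighborFinset v, G.neighborFinset v]) := by
        refine card_le_card fun x hx => mem_piFinset.2 fun i => ?_
        simp only [orderedCherries, mem_filter, mem_univ, true_and] at hx
        obtain ⟨⟨h1, h2⟩, rfl⟩ := hx
        fin_cases i <;> simp [h1, h2]
    _ ≤ Δ ^ 2 := by
        rw [card_piFinset_three, card_singleton, one_mul, G.card_neighborFinset_eq_degree, sq]
        exact Nat.mul_le_mul (hdeg v) (hdeg v)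

lemma card_orderedCherries_filter_one_le (hdeg : ∀ v, G.degree v ≤ Δ) (v : V) :
    #{x ∈ orderedCherries G | x 1 = v} ≤ Δ ^ 2 := by
  calc #{x ∈ orderedCherries G | x 1 = v} ≤ Δ * #(G.neighborFinset v) := by
        refine card_le_mul_card_image_of_maps_to (f := fun x => x 0) (fun x hx => ?_) Δ
          fun u _ => ?_
        · simp only [orderedCherries, mem_filter, mem_univ, true_and] at hx
          obtain ⟨⟨h1, -⟩, rfl⟩ := hx
          simpa using h1.symm
        · calc _ ≤ #(piFinset ![{u}, {v}, G.neighborFinset u]) := by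
                refine card_le_card fun x hx => mem_piFinset.2 fun i => ?_
                simp only [orderedCherries, mem_filter, mem_univ, true_and] at hx
                obtain ⟨⟨⟨-, h2⟩, rfl⟩, rfl⟩ := hx
                fin_cases i <;> simp [h2]
            _ ≤ Δ := by rw [card_piFinset_three]; simpa using hdeg u
    _ ≤ Δ ^ 2 := by
        rw [G.card_neighborFinset_eq_degree, sq]
        exact Nat.mul_le_mul_left Δ (hdeg v)

lemma card_orderedCherries_filter_mem_le (hdeg : ∀ v, G.degree v ≤ Δ) (v : V) :
    #{x ∈ orderedCherries G | v ∈ univ.image x} ≤ 3 * Δ ^ 2 := by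
  have := card_filter_mem_image_le (orderedCherries G) v
  have := card_filter_two_le (swapTail_mem_orderedCherries G) (· = v)
  have := card_orderedCherries_filter_zero_le G hdeg v
  have := card_orderedCherries_filter_one_le G hdeg v
  omega

lemma card_orderedCherries_le (hdeg : ∀ v, G.degree v ≤ Δ) :
    #(orderedCherries G) ≤ card V * Δ ^ 2 := by
  rw [mul_comm, ← card_univ]
  exact card_le_mul_card_image_of_maps_to (fun x _ => mem_univ (x 0)) _
    fun v _ => card_orderedCherries_filter_zero_le G hdeg v

end DecidableEq

variable [LinearOrder V]

/-- A cherry `x` is the path `x 1 - x 0 - x 2` of `G`; listing the leaves in increasing order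
records each path of length two once. -/
def cherries : Finset (Fin 3 → V) := {x ∈ orderedCherries G | x 1 < x 2}

lemma two_mul_card_cherries_filter_mem_le (hdeg : ∀ v, G.degree v ≤ Δ) (v : V) :
    2 * #{x ∈ cherries G | v ∈ univ.image x} ≤ 3 * Δ ^ 2 := by
  refine le_trans ?_ (card_orderedCherries_filter_mem_le G hdeg v)
  rw [cherries, filter_comm]
  refine two_mul_card_filter_lt_le fun x hx => ?_
  rw [mem_filter, image_swapTail] at *
  exact ⟨swapTail_mem_orderedCherries G x hx.1, hx.2⟩

lemma two_mul_card_cherries_le (hdeg : ∀ v, G.degree v ≤ Δ) :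
    2 * #(cherries G) ≤ card V * Δ ^ 2 :=
  (two_mul_card_filter_lt_le (swapTail_mem_orderedCherries G)).trans
    (card_orderedCherries_le G hdeg)

lemma injective_of_mem_cherries {x : Fin 3 → V} (hx : x ∈ cherries G) : Injective x := by
  simp only [cherries, orderedCherries, mem_filter, mem_univ, true_and] at hx
  obtain ⟨⟨h01, h02⟩, h12⟩ := hx
  intro i j hij
  fin_cases i <;> fin_cases j <;>
    simp_all [h01.ne, h02.ne, h12.ne, h01.ne.symm, h02.ne.symm, h12.ne']

end Cherries

section SameColour

open Fin3Tuple

variable {V C : Type*} [Fintype V] [DecidableEq V] [DecidableEq C] (χ : Sym2 V → C) {k : ℕ}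

def sameColourTriples : Finset (Fin 3 → V) :=
  {a | a 1 ≠ a 0 ∧ a 2 ≠ a 0 ∧ χ s(a 0, a 1) = χ s(a 0, a 2)}

lemma swapTail_mem_sameColourTriples :
    ∀ a ∈ sameColourTriples χ, swapTail a ∈ sameColourTriples χ := by
  intro a ha
  simp only [sameColourTriples, mem_filter, mem_univ, true_and] at ha ⊢
  exact ⟨ha.2.1, ha.1, ha.2.2.symm⟩

lemma card_sameColourTriples_filter_le (hχ : ∀ v col, #{u | u ≠ v ∧ χ s(v, u) = col} ≤ k)
    (u w : V) : #{a ∈ sameColourTriples χ | a 0 = u ∧ a 1 = w} ≤ k := by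
  calc _ ≤ #(piFinset ![{u}, {w}, ({c | c ≠ u ∧ χ s(u, c) = χ s(u, w)} : Finset V)]) := by
        refine card_le_card fun a ha => mem_piFinset.2 fun i => ?_
        simp only [sameColourTriples, mem_filter, mem_univ, true_and] at ha
        obtain ⟨⟨-, h2, h⟩, rfl, rfl⟩ := ha
        fin_cases i <;> simp [h2, h]
    _ ≤ k := by rw [card_piFinset_three]; simpa using hχ u _

lemma card_sameColourTriples_le (hχ : ∀ v col, #{u | u ≠ v ∧ χ s(v, u) = col} ≤ k) :
    #(sameColourTriples χ) ≤ card V * (card V - 1) * k := by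
  have hmaps : ∀ a ∈ sameColourTriples χ, (a 0, a 1) ∈ (univ : Finset V).offDiag := by
    intro a ha
    simp only [sameColourTriples, mem_filter, mem_univ, true_and] at ha
    simpa using ha.1.symm
  refine (card_le_mul_card_image_of_maps_to hmaps k fun p _ => ?_).trans_eq ?_
  · simpa [Prod.ext_iff] using card_sameColourTriples_filter_le χ hχ p.1 p.2
  · rw [offDiag_card, card_univ, ← Nat.mul_sub_one, mul_comm]

lemma card_sameColourTriples_filter_zero_le
    (hχ : ∀ v col, #{u | u ≠ v ∧ χ s(v, u) = col} ≤ k) (v : V) :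
    #{a ∈ sameColourTriples χ | a 0 = v} ≤ (card V - 1) * k := by
  have hmaps : ∀ a ∈ {a ∈ sameColourTriples χ | a 0 = v},
      a 1 ∈ (univ : Finset V).erase v := by
    intro a ha
    simp only [sameColourTriples, mem_filter, mem_univ, true_and] at ha
    simpa [← ha.2] using ha.1.1
  refine (card_le_mul_card_image_of_maps_to hmaps k fun w _ => ?_).trans_eq ?_
  · simpa [filter_filter] using card_sameColourTriples_filter_le χ hχ v w
  · rw [card_erase_of_mem (mem_univ v), card_univ, mul_comm]

lemma card_sameColourTriples_filter_one_le
    (hχ : ∀ v col, #{u | u ≠ v ∧ χ s(v, u) = col} ≤ k) (v : V) :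
    #{a ∈ sameColourTriples χ | a 1 = v} ≤ (card V - 1) * k := by
  have hmaps : ∀ a ∈ {a ∈ sameColourTriples χ | a 1 = v},
      a 0 ∈ (univ : Finset V).erase v := by
    intro a ha
    simp only [sameColourTriples, mem_filter, mem_univ, true_and] at ha
    simpa [← ha.2] using ha.1.1.symm
  refine (card_le_mul_card_image_of_maps_to hmaps k fun u _ => ?_).trans_eq ?_
  · simpa [filter_filter, and_comm] using card_sameColourTriples_filter_le χ hχ u v
  · rw [card_erase_of_mem (mem_univ v), card_univ, mul_comm]

lemma card_sameColourTriples_filter_mem_le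
    (hχ : ∀ v col, #{u | u ≠ v ∧ χ s(v, u) = col} ≤ k) (v : V) :
    #{a ∈ sameColourTriples χ | v ∈ univ.image a} ≤ 3 * ((card V - 1) * k) := by
  have := card_filter_mem_image_le (sameColourTriples χ) v
  have := card_filter_two_le (swapTail_mem_sameColourTriples χ) (· = v)
  have := card_sameColourTriples_filter_zero_le χ hχ v
  have := card_sameColourTriples_filter_one_le χ hχ v
  omega

end SameColour

section ProperlyColouredCopy

variable {V C : Type*} [Fintype V] [LinearOrder V] [DecidableEq C]
  (G : SimpleGraph V) [DecidableRel G.Adj] (χ : Sym2 V → C) {k Δ : ℕ}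

lemma two_mul_card_filter_mem_slots_le (hdeg : ∀ v, G.degree v ≤ Δ)
    (hχ : ∀ v col, #{u | u ≠ v ∧ χ s(v, u) = col} ≤ k) (s : V ⊕ V) :
    2 * #{B ∈ cherries G ×ˢ sameColourTriples χ | s ∈ PermTuple.slots B} ≤
      3 * (Δ ^ 2 * k) * (card V * (card V - 1)) := by
  cases s with
  | inl v =>
    simp only [PermTuple.inl_mem_slots]
    rw [filter_product_left (fun x => v ∈ univ.image x), card_product, ← mul_assoc]
    calc _ ≤ 3 * Δ ^ 2 * (card V * (card V - 1) * k) :=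
          Nat.mul_le_mul (two_mul_card_cherries_filter_mem_le G hdeg v)
            (card_sameColourTriples_le χ hχ)
      _ = _ := by ring
  | inr v =>
    simp only [PermTuple.inr_mem_slots]
    rw [filter_product_right (fun x => v ∈ univ.image x), card_product, ← mul_assoc]
    calc _ ≤ card V * Δ ^ 2 * (3 * ((card V - 1) * k)) :=
          Nat.mul_le_mul (two_mul_card_cherries_le G hdeg)
            (card_sameColourTriples_filter_mem_le χ hχ v)
      _ = _ := by ring

/-- `6 / 5` is the ratio `q / p` maximising `(q - p) p ^ 5 / q ^ 6`, and
`3 * 6 ^ 6 / (2 * 5 ^ 5) ≈ 22.395 < 22.4`. -/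
lemma six_pow_mul_le {N P m r : ℕ} (hN : 2 * N ≤ 3 * P * m) (hP : 224 * P ≤ 10 * r) :
    6 ^ 6 * N ≤ 5 ^ 5 * (m * r) := by
  nlinarith

theorem exists_perm_properly_coloured (hdeg : ∀ v, G.degree v ≤ Δ)
    (hχ : ∀ v col, #{u | u ≠ v ∧ χ s(v, u) = col} ≤ k) (hΔ : 0 < Δ) (hk : 0 < k)
    (hn : 224 * (Δ ^ 2 * k) ≤ 10 * (card V - 2)) :
    ∃ σ : Perm V, ∀ x y z, G.Adj x y → G.Adj x z → y < z →
      χ s(σ x, σ y) ≠ χ s(σ x, σ z) := by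
  set c := (card V).descFactorial (card (Fin 3))
  have hc : c = card V * (card V - 1) * (card V - 2) := by simp [c, Nat.descFactorial]; ring
  have hslots : ∀ τ ∈ cherries G ×ˢ sameColourTriples χ, #(PermTuple.slots τ) ≤ 5 + 1 :=
    fun τ _ => (PermTuple.card_slots_le τ).trans_eq (by simp)
  have hclique : ∀ s, 6 ^ (5 + 1) * #{B ∈ cherries G ×ˢ sameColourTriples χ |
      s ∈ PermTuple.slots B} ≤ (6 - 5) * 5 ^ 5 * c := fun s => by
    simpa [hc, mul_assoc] using
      six_pow_mul_le (two_mul_card_filter_mem_slots_le G χ hdeg hχ s) hn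
  have hswitch : ∀ τ ∈ cherries G ×ˢ sameColourTriples χ, ∀ S, (∀ B ∈ S,
      Disjoint (PermTuple.slots B) (PermTuple.slots τ)) →
      c * #(avoiding PermTuple.event S ∩ PermTuple.event τ) ≤ #(avoiding PermTuple.event S) :=
    fun τ hτ => PermTuple.descFactorial_mul_card_avoiding_inter_le τ
      (injective_of_mem_cherries G (mem_product.1 hτ).1)
  have hpos : 6 ^ (5 + 1) < 5 ^ (5 + 1) * c := by
    have h224 : 224 ≤ 224 * (Δ ^ 2 * k) :=
      Nat.le_mul_of_pos_right 224 (Nat.mul_pos (pow_pos hΔ 2) hk)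
    have h25 : 25 ≤ card V := by omega
    have : 25 * 24 * 23 ≤ c := by
      rw [hc]
      exact Nat.mul_le_mul (Nat.mul_le_mul h25 (by omega)) (by omega)
    omega
  obtain ⟨σ, hσ⟩ := exists_forall_notMem_of_switching (by norm_num) hslots hclique hswitch hpos
  refine ⟨σ, fun x y z hxy hxz hyz hcol => hσ (![x, y, z], ![σ x, σ y, σ z]) ?_ ?_⟩
  · refine mem_product.2 ⟨?_, ?_⟩
    · simp [cherries, orderedCherries, hxy, hxz, hyz]
    · simp [sameColourTriples, hcol, hxy.ne', hxz.ne']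
  · exact PermTuple.mem_event.2 fun i => by fin_cases i <;> rfl

end ProperlyColouredCopy

/-- **Corollary 4** (Böttcher–Kohayakawa–Procacci).
If `G` has `n` vertices and maximum degree `Δ > 0`, and `k` is a positive integer with
`k ≤ (n−2)/(22.4·Δ²)`, then every locally `k`-bounded edge colouring of `K_n` contains a
properly coloured copy of `G`. -/
theorem properly_coloured_copy_of_bounded_degree_graph
    {n Δ : ℕ} {C : Type*} (G : SimpleGraph (Fin n)) [DecidableRel G.Adj]
    (hΔ : G.maxDegree = Δ) (hΔpos : 0 < Δ)
    (k : ℕ) (hk : 0 < k)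
    (hkle : (k : ℝ) ≤ ((n : ℝ) - 2) / (22.4 * (Δ : ℝ)^2))
    (χ : Sym2 (Fin n) → C)
    (hχ : ∀ (v : Fin n) (c : C), {u : Fin n | u ≠ v ∧ χ s(v, u) = c}.ncard ≤ k) :
    ∃ σ : Fin n ↪ Fin n, ∀ x y z : Fin n, G.Adj x y → G.Adj x z → y ≠ z →
      χ s(σ x, σ y) ≠ χ s(σ x, σ z) := by
  classical
  have hdeg : ∀ v, G.degree v ≤ Δ := fun v => hΔ ▸ G.degree_le_maxDegree v
  have hχ' : ∀ v c, #{u | u ≠ v ∧ χ s(v, u) = c} ≤ k := fun v c => by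
    simpa [Set.ncard_eq_toFinset_card'] using hχ v c
  have hn : 224 * (Δ ^ 2 * k) ≤ 10 * (card (Fin n) - 2) := by
    have hkΔ : (k : ℝ) * (22.4 * Δ ^ 2) ≤ n - 2 := (le_div_iff₀ (by positivity)).1 hkle
    have : 224 * (Δ ^ 2 * k) + 20 ≤ 10 * n := by
      exact_mod_cast (show ((224 * (Δ ^ 2 * k) + 20 : ℕ) : ℝ) ≤ (10 * n : ℕ) by
        push_cast
        linarith)
    rw [Fintype.card_fin]
    omega
  obtain ⟨σ, hσ⟩ := exists_perm_properly_coloured G χ hdeg hχ' hΔpos hk hn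
  refine ⟨σ.toEmbedding, fun x y z hxy hxz hyz => ?_⟩
  rcases hyz.lt_or_gt with h | h
  · exact hσ x y z hxy hxz h
  · exact (hσ x z y hxz hxy h).symm
end

section
/- Let 𝒳 = {X_1, …, X_t} be a finite set of events in a probability space with a negative dependency graph D = (𝒳, E), and let Δ(D) denote the maximum degree of D. If P(X_i) < 1/(e·(Δ(D)+1)) for all i ∈ [t], where e is Euler's number, then P(⋂_{i∈[t]} X_iᶜ) > 0. -/
/-!
Put `x = 1/(Δ+2)`. By induction on `|Z|` one shows that `P(X_i | ⋂_{j ∈ Z} X_jᶜ) ≤ x` whenever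
`i ∉ Z`: dropping the neighbours `N` of `i` from `Z` costs, by the induction hypothesis applied
one neighbour at a time, a factor of at most `(1 - x)^|N| ≥ (1 - x)^Δ`, and negative dependence
bounds the remaining conditional probability by `P(X_i) ≤ x(1 - x)^Δ`. Peeling off the events one
at a time then gives `P(⋂ X_iᶜ) ≥ (1 - x)^t > 0`. The hypothesis `P(X_i) < 1/(e(Δ+1))` suffices
because `(1 + 1/(Δ+1))^(Δ+1) ≤ e`.
-/

open MeasureTheory

/-- `D` is a negative dependency graph for the events `X i` with respect to `μ`:
every event is "negatively dependent" on any collection of events outside its closed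
neighbourhood in `D`. -/
def IsNegDepGraph {Ω : Type*} [MeasurableSpace Ω] (μ : Measure Ω) {t : ℕ}
    (X : Fin t → Set Ω) (D : SimpleGraph (Fin t)) : Prop :=
  ∀ (i : Fin t) (Z : Finset (Fin t)), (∀ j ∈ Z, j ≠ i ∧ ¬ D.Adj i j) →
    μ (X i ∩ ⋂ j ∈ Z, (X j)ᶜ) ≤ μ (X i) * μ (⋂ j ∈ Z, (X j)ᶜ)

open scoped ENNReal

lemma one_div_exp_mul_le (n : ℕ) :
    1 / (Real.exp 1 * (n + 1)) ≤ 1 / (n + 2 : ℝ) * (1 - 1 / (n + 2 : ℝ)) ^ n := by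
  have he : ((n + 2) / (n + 1) : ℝ) ^ (n + 1) ≤ Real.exp 1 := by
    convert Real.one_add_inv_pow_le_exp (n := n + 1) using 2
    push_cast; field_simp; ring
  rw [div_pow, div_le_iff₀ (by positivity)] at he
  have hq : 1 - 1 / (n + 2 : ℝ) = (n + 1) / (n + 2) := by field_simp; ring
  calc 1 / (Real.exp 1 * (n + 1)) = (n + 1) ^ n / (Real.exp 1 * (n + 1) ^ (n + 1)) := by
        field_simp; ring
    _ ≤ (n + 1) ^ n / (n + 2) ^ (n + 1) := by gcongr
    _ = 1 / (n + 2 : ℝ) * (1 - 1 / (n + 2 : ℝ)) ^ n := by rw [hq, div_pow]; field_simp; ring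

section

variable {Ω : Type*} [MeasurableSpace Ω] {μ : Measure Ω} [IsFiniteMeasure μ] {a b : ℝ≥0∞}

lemma mul_measure_le_measure_diff {A C : Set Ω} (hA : MeasurableSet A) (hab : a + b = 1)
    (h : μ (A ∩ C) ≤ a * μ C) : b * μ C ≤ μ (C \ A) := by
  have ha : a ≠ ∞ := ne_top_of_le_ne_top ENNReal.one_ne_top (hab ▸ le_self_add)
  refine (ENNReal.add_le_add_iff_left (ENNReal.mul_ne_top ha (measure_ne_top μ C))).1 ?_
  calc a * μ C + b * μ C = μ (C ∩ A) + μ (C \ A) := by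
        rw [← add_mul, hab, one_mul, measure_inter_add_sdiff C hA]
    _ ≤ a * μ C + μ (C \ A) := by rw [Set.inter_comm]; gcongr

lemma pow_card_mul_le_measure_inter_biInter_compl {ι : Type*} [DecidableEq ι] {X : ι → Set Ω}
    (hX : ∀ i, MeasurableSet (X i)) (hab : a + b = 1) (B : Set Ω) (S : Finset ι)
    (h : ∀ W ⊆ S, ∀ j ∈ S, j ∉ W →
      μ (X j ∩ (B ∩ ⋂ k ∈ W, (X k)ᶜ)) ≤ a * μ (B ∩ ⋂ k ∈ W, (X k)ᶜ)) :
    b ^ S.card * μ B ≤ μ (B ∩ ⋂ k ∈ S, (X k)ᶜ) := by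
  induction S using Finset.induction_on with
  | empty => simp
  | insert j S hjS ih =>
    have ih' := ih fun W hW k hk ↦
      h W (hW.trans (Finset.subset_insert j S)) k (Finset.mem_insert_of_mem hk)
    have hpeel := mul_measure_le_measure_diff (hX j) hab
      (h S (Finset.subset_insert j S) j (Finset.mem_insert_self j S) hjS)
    calc b ^ (insert j S).card * μ B = b * (b ^ S.card * μ B) := by
          rw [Finset.card_insert_of_notMem hjS, pow_succ', mul_assoc]
      _ ≤ b * μ (B ∩ ⋂ k ∈ S, (X k)ᶜ) := by gcongr
      _ ≤ μ ((B ∩ ⋂ k ∈ S, (X k)ᶜ) \ X j) := hpeel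
      _ = μ (B ∩ ⋂ k ∈ insert j S, (X k)ᶜ) := by
          rw [Finset.set_biInter_insert, Set.sdiff_eq, Set.inter_assoc, Set.inter_comm _ (X j)ᶜ]

end

namespace IsNegDepGraph

variable {Ω : Type*} [MeasurableSpace Ω] {μ : Measure Ω} {a b : ℝ≥0∞}
  {t : ℕ} {X : Fin t → Set Ω} {D : SimpleGraph (Fin t)} [DecidableRel D.Adj]

lemma measure_inter_biInter_compl_le [IsFiniteMeasure μ] (hD : IsNegDepGraph μ X D)
    (hmeas : ∀ i, MeasurableSet (X i)) (hab : a + b = 1)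
    (hX : ∀ i, μ (X i) ≤ a * b ^ D.degree i) (Z : Finset (Fin t)) {i : Fin t} (hi : i ∉ Z) :
    μ (X i ∩ ⋂ j ∈ Z, (X j)ᶜ) ≤ a * μ (⋂ j ∈ Z, (X j)ᶜ) := by
  induction Z using Finset.strongInduction generalizing i with
  | H Z ih =>
  set N := Z.filter (D.Adj i)
  set F := Z.filter (fun j ↦ ¬ D.Adj i j)
  have biInter_compl_union (W : Finset (Fin t)) :
      (⋂ j ∈ F, (X j)ᶜ) ∩ ⋂ j ∈ W, (X j)ᶜ = ⋂ j ∈ F ∪ W, (X j)ᶜ := by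
    simp only [← Finset.mem_coe, Finset.coe_union, Set.biInter_union]
  have hN : N.card ≤ D.degree i := by
    rw [← D.card_neighborFinset_eq_degree]
    exact Finset.card_le_card fun j hj ↦ (D.mem_neighborFinset i j).2 (Finset.mem_filter.1 hj).2
  have hpeel : b ^ N.card * μ (⋂ j ∈ F, (X j)ᶜ) ≤ μ (⋂ j ∈ Z, (X j)ᶜ) := by
    rw [← Finset.filter_union_filter_not_eq (D.Adj i) Z, Finset.union_comm, ← biInter_compl_union]
    refine pow_card_mul_le_measure_inter_biInter_compl hmeas hab _ N fun W hW j hj hjW ↦ ?_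
    have hjF : j ∉ F := fun h ↦ (Finset.mem_filter.1 h).2 (Finset.mem_filter.1 hj).2
    have hsub : F ∪ W ⊆ Z :=
      Finset.union_subset (Finset.filter_subset _ _) (hW.trans (Finset.filter_subset _ _))
    rw [biInter_compl_union]
    refine ih _ ((Finset.ssubset_iff_of_subset hsub).2 ⟨j, Finset.mem_of_mem_filter j hj, ?_⟩) ?_ <;>
      simp [hjF, hjW]
  have hneg := hD i F fun j hj ↦
    ⟨fun h ↦ hi (h ▸ Finset.mem_of_mem_filter j hj), (Finset.mem_filter.1 hj).2⟩
  have hb : b ≤ 1 := hab ▸ le_add_self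
  calc μ (X i ∩ ⋂ j ∈ Z, (X j)ᶜ) ≤ μ (X i ∩ ⋂ j ∈ F, (X j)ᶜ) :=
        measure_mono (Set.inter_subset_inter_right _
          (Set.biInter_subset_biInter_left (Finset.filter_subset _ _)))
    _ ≤ μ (X i) * μ (⋂ j ∈ F, (X j)ᶜ) := hneg
    _ ≤ a * b ^ N.card * μ (⋂ j ∈ F, (X j)ᶜ) := by
        gcongr
        exact (hX i).trans (mul_le_mul_right (pow_le_pow_of_le_one zero_le hb hN) a)
    _ ≤ a * μ (⋂ j ∈ Z, (X j)ᶜ) := by rw [mul_assoc]; gcongr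

lemma pow_le_measure_iInter_compl [IsProbabilityMeasure μ] (hD : IsNegDepGraph μ X D)
    (hmeas : ∀ i, MeasurableSet (X i)) (hab : a + b = 1)
    (hX : ∀ i, μ (X i) ≤ a * b ^ D.degree i) :
    b ^ t ≤ μ (⋂ i, (X i)ᶜ) := by
  have h := pow_card_mul_le_measure_inter_biInter_compl hmeas hab Set.univ Finset.univ
    fun W _ j _ hj ↦ by
      simpa only [Set.univ_inter] using hD.measure_inter_biInter_compl_le hmeas hab hX W hj
  simpa using h

end IsNegDepGraph

/-- **Lovász local lemma, symmetric version** (Lemma 9(i)): if each event has probability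
less than `1/(e·(Δ(D)+1))`, where `D` is a negative dependency graph with maximum degree
`Δ(D)`, then with positive probability no event occurs. -/
theorem local_lemma_symmetric
    {Ω : Type*} [MeasurableSpace Ω] (μ : Measure Ω) [IsProbabilityMeasure μ]
    {t : ℕ} (X : Fin t → Set Ω) (hmeas : ∀ i, MeasurableSet (X i))
    (D : SimpleGraph (Fin t)) [DecidableRel D.Adj]
    (hD : IsNegDepGraph μ X D)
    (hP : ∀ i, μ (X i) < ENNReal.ofReal (1 / (Real.exp 1 * (D.maxDegree + 1)))) :
    0 < μ (⋂ i, (X i)ᶜ) := by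
  set x : ℝ := 1 / (D.maxDegree + 2)
  have hx0 : 0 ≤ x := by positivity
  have hx1 : x < 1 := by rw [div_lt_one (by positivity)]; linarith
  have hab : ENNReal.ofReal x + ENNReal.ofReal (1 - x) = 1 := by
    rw [← ENNReal.ofReal_add hx0 (by linarith), add_sub_cancel, ENNReal.ofReal_one]
  have hb : ENNReal.ofReal (1 - x) ≤ 1 := ENNReal.ofReal_le_one.2 (by linarith)
  refine (ENNReal.pow_pos (ENNReal.ofReal_pos.2 (by linarith)) t).trans_le
    (hD.pow_le_measure_iInter_compl hmeas hab fun i ↦ ?_)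
  calc μ (X i) ≤ ENNReal.ofReal (x * (1 - x) ^ D.maxDegree) :=
        (hP i).le.trans (ENNReal.ofReal_le_ofReal (one_div_exp_mul_le _))
    _ = ENNReal.ofReal x * ENNReal.ofReal (1 - x) ^ D.maxDegree := by
        rw [ENNReal.ofReal_mul hx0, ENNReal.ofReal_pow (by linarith)]
    _ ≤ ENNReal.ofReal x * ENNReal.ofReal (1 - x) ^ D.degree i :=
        mul_le_mul_right (pow_le_pow_of_le_one zero_le hb (D.degree_le_maxDegree i)) _
end

section
/- Let 𝒳 = {X_1, …, X_t} be a finite set of events in a probability space with a negative dependency graph D = (𝒳, E). If there are real numbers x_1, …, x_t in the open interval (0,1) such that for all i ∈ [t] one has P(X_i) ≤ x_i · ∏_{j : X_jX_i ∈ E} (1 − x_j), then P(⋂_{i∈[t]} X_iᶜ) > 0. -/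
open MeasureTheory

section aux

variable {Ω : Type*} [MeasurableSpace Ω] (μ : Measure Ω) [IsProbabilityMeasure μ]
    {t : ℕ} (X : Fin t → Set Ω)

private lemma measA (hmeas : ∀ i, MeasurableSet (X i)) (Z : Finset (Fin t)) :
    MeasurableSet (⋂ j ∈ Z, (X j)ᶜ) :=
  MeasurableSet.biInter Z.countable_toSet fun j _ => (hmeas j).compl

/-- Key induction: conditional probability bound. -/
private lemma key (hmeas : ∀ i, MeasurableSet (X i))
    (D : SimpleGraph (Fin t)) [DecidableRel D.Adj]
    (hD : IsNegDepGraph μ X D)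
    (x : Fin t → ℝ) (hx : ∀ i, 0 < x i ∧ x i < 1)
    (hP : ∀ i, μ (X i) ≤ ENNReal.ofReal (x i * ∏ j ∈ D.neighborFinset i, (1 - x j)))
    (n : ℕ) : ∀ Z : Finset (Fin t), Z.card ≤ n → ∀ i ∉ Z,
      (μ (X i ∩ ⋂ j ∈ Z, (X j)ᶜ)).toReal ≤ x i * (μ (⋂ j ∈ Z, (X j)ᶜ)).toReal := by
  induction n using Nat.strong_induction_on with
  | _ n ih =>
  intro Z hZn i hiZ
  classical
  set A : Finset (Fin t) → Set Ω := fun S => ⋂ j ∈ S, (X j)ᶜ with hA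
  set Z₁ : Finset (Fin t) := Z.filter (fun j => D.Adj i j) with hZ₁
  set Z₂ : Finset (Fin t) := Z.filter (fun j => ¬ D.Adj i j) with hZ₂
  have hZsplit : Z₂ ∪ Z₁ = Z := by
    rw [hZ₁, hZ₂, Finset.union_comm]
    exact Finset.filter_union_filter_not_eq _ Z
  have hx0 : ∀ j, (0:ℝ) ≤ 1 - x j := fun j => by linarith [(hx j).2]
  have hx1 : ∀ j, 1 - x j ≤ 1 := fun j => by linarith [(hx j).1]
  -- step 1 : A Z ⊆ A Z₂
  have hsub : A Z ⊆ A Z₂ := by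
    intro w hw
    simp only [hA, Set.mem_iInter] at *
    exact fun j hj => hw j (Finset.filter_subset _ _ hj)
  -- step 2 : negative dependency on Z₂
  have hneg : μ (X i ∩ A Z₂) ≤ μ (X i) * μ (A Z₂) := by
    refine hD i Z₂ fun j hj => ⟨?_, (Finset.mem_filter.mp hj).2⟩
    rintro rfl
    exact hiZ (Finset.filter_subset _ _ hj)
  -- peel claim
  have peel : ∀ S : Finset (Fin t), S ⊆ Z₁ →
      (∏ j ∈ S, (1 - x j)) * (μ (A Z₂)).toReal ≤ (μ (A (Z₂ ∪ S))).toReal := by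
    intro S
    induction S using Finset.induction_on with
    | empty => intro _; simp
    | @insert j S hjS ihS =>
      intro hsubS
      have hjZ₁ : j ∈ Z₁ := hsubS (Finset.mem_insert_self _ _)
      have hSZ₁ : S ⊆ Z₁ := fun a ha => hsubS (Finset.mem_insert_of_mem ha)
      have hjZ : j ∈ Z := Finset.filter_subset _ _ hjZ₁
      have hjAdj : D.Adj i j := (Finset.mem_filter.mp hjZ₁).2
      have hjZ₂ : j ∉ Z₂ := fun h => (Finset.mem_filter.mp h).2 hjAdj
      have hjU : j ∉ Z₂ ∪ S := by simp [hjZ₂, hjS]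
      have hsubE : Z₂ ∪ S ⊆ Z.erase j := by
        intro a ha
        rcases Finset.mem_union.mp ha with h | h
        · exact Finset.mem_erase.mpr ⟨fun he => hjZ₂ (he ▸ h), Finset.filter_subset _ _ h⟩
        · exact Finset.mem_erase.mpr ⟨fun he => hjS (he ▸ h),
            Finset.filter_subset _ _ (hSZ₁ h)⟩
      have hcard : (Z₂ ∪ S).card < n :=
        lt_of_le_of_lt (Finset.card_le_card hsubE)
          (lt_of_lt_of_le (Finset.card_erase_lt_of_mem hjZ) hZn)
      have hkey := ih (Z₂ ∪ S).card hcard (Z₂ ∪ S) le_rfl j hjU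
      -- set decomposition
      have hset : A (Z₂ ∪ insert j S) = A (Z₂ ∪ S) \ X j := by
        rw [Finset.union_insert]
        ext w
        simp only [hA, Set.mem_iInter, Set.mem_diff, Set.mem_compl_iff,
          Finset.mem_insert]
        constructor
        · intro h
          exact ⟨fun a ha => h a (Or.inr ha), h j (Or.inl rfl)⟩
        · rintro ⟨h1, h2⟩ a (rfl | ha)
          · exact h2
          · exact h1 a ha
      have hfin : μ (A (Z₂ ∪ S)) ≠ ⊤ := measure_ne_top _ _
      have hdecomp : (μ (A (Z₂ ∪ S) \ X j)).toReal
          = (μ (A (Z₂ ∪ S))).toReal - (μ (X i ∩ A (Z₂ ∪ S))).toReal ∨ True := Or.inr trivial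
      have hadd : μ (A (Z₂ ∪ S) ∩ X j) + μ (A (Z₂ ∪ S) \ X j) = μ (A (Z₂ ∪ S)) :=
        measure_inter_add_diff _ (hmeas j)
      have htR : (μ (A (Z₂ ∪ S) \ X j)).toReal
          = (μ (A (Z₂ ∪ S))).toReal - (μ (A (Z₂ ∪ S) ∩ X j)).toReal := by
        rw [← hadd, ENNReal.toReal_add (measure_ne_top _ _) (measure_ne_top _ _)]
        ring
      have hXj : (μ (A (Z₂ ∪ S) ∩ X j)).toReal ≤ x j * (μ (A (Z₂ ∪ S))).toReal := by
        rw [Set.inter_comm]; exact hkey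
      calc (∏ a ∈ insert j S, (1 - x a)) * (μ (A Z₂)).toReal
          = (1 - x j) * ((∏ a ∈ S, (1 - x a)) * (μ (A Z₂)).toReal) := by
            rw [Finset.prod_insert hjS]; ring
        _ ≤ (1 - x j) * (μ (A (Z₂ ∪ S))).toReal :=
            mul_le_mul_of_nonneg_left (ihS hSZ₁) (hx0 j)
        _ = (μ (A (Z₂ ∪ S))).toReal - x j * (μ (A (Z₂ ∪ S))).toReal := by ring
        _ ≤ (μ (A (Z₂ ∪ S))).toReal - (μ (A (Z₂ ∪ S) ∩ X j)).toReal := by linarith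
        _ = (μ (A (Z₂ ∪ S) \ X j)).toReal := htR.symm
        _ = (μ (A (Z₂ ∪ insert j S))).toReal := by rw [hset]
  -- bound on μ (X i)
  have hprodnn : (0:ℝ) ≤ ∏ j ∈ D.neighborFinset i, (1 - x j) :=
    Finset.prod_nonneg fun j _ => hx0 j
  have hPi : (μ (X i)).toReal ≤ x i * ∏ j ∈ D.neighborFinset i, (1 - x j) :=
    ENNReal.toReal_le_of_le_ofReal (mul_nonneg (hx i).1.le hprodnn) (hP i)
  have hZ₁sub : Z₁ ⊆ D.neighborFinset i := by
    intro a ha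
    exact SimpleGraph.mem_neighborFinset _ _ _ |>.mpr (Finset.mem_filter.mp ha).2
  have hprodmono : ∏ j ∈ D.neighborFinset i, (1 - x j) ≤ ∏ j ∈ Z₁, (1 - x j) := by
    rw [← Finset.prod_sdiff hZ₁sub]
    have h1 : ∏ j ∈ D.neighborFinset i \ Z₁, (1 - x j) ≤ 1 :=
      Finset.prod_le_one (fun j _ => hx0 j) (fun j _ => hx1 j)
    have h2 : (0:ℝ) ≤ ∏ j ∈ Z₁, (1 - x j) := Finset.prod_nonneg fun j _ => hx0 j
    nlinarith [Finset.prod_nonneg (fun j (_ : j ∈ D.neighborFinset i \ Z₁) => hx0 j)]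
  calc (μ (X i ∩ A Z)).toReal
      ≤ (μ (X i ∩ A Z₂)).toReal := by
        apply ENNReal.toReal_mono (measure_ne_top _ _)
        exact measure_mono (Set.inter_subset_inter_right _ hsub)
    _ ≤ ((μ (X i)) * μ (A Z₂)).toReal := ENNReal.toReal_mono
        (ENNReal.mul_ne_top (measure_ne_top _ _) (measure_ne_top _ _)) hneg
    _ = (μ (X i)).toReal * (μ (A Z₂)).toReal := ENNReal.toReal_mul
    _ ≤ (x i * ∏ j ∈ Z₁, (1 - x j)) * (μ (A Z₂)).toReal := by
        apply mul_le_mul_of_nonneg_right _ ENNReal.toReal_nonneg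
        calc (μ (X i)).toReal ≤ x i * ∏ j ∈ D.neighborFinset i, (1 - x j) := hPi
          _ ≤ x i * ∏ j ∈ Z₁, (1 - x j) :=
            mul_le_mul_of_nonneg_left hprodmono (hx i).1.le
    _ = x i * ((∏ j ∈ Z₁, (1 - x j)) * (μ (A Z₂)).toReal) := by ring
    _ ≤ x i * (μ (A (Z₂ ∪ Z₁))).toReal :=
        mul_le_mul_of_nonneg_left (peel Z₁ le_rfl) (hx i).1.le
    _ = x i * (μ (A Z)).toReal := by rw [hZsplit]

end aux

/-- **Lovász local lemma, general version** (Lemma 9(ii)): if there are numbers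
`x i ∈ (0,1)` with `P(X i) ≤ x i · ∏_{j ~ i} (1 - x j)`, where `D` is a negative dependency
graph, then with positive probability no event occurs. -/
theorem local_lemma_general
    {Ω : Type*} [MeasurableSpace Ω] (μ : Measure Ω) [IsProbabilityMeasure μ]
    {t : ℕ} (X : Fin t → Set Ω) (hmeas : ∀ i, MeasurableSet (X i))
    (D : SimpleGraph (Fin t)) [DecidableRel D.Adj]
    (hD : IsNegDepGraph μ X D)
    (x : Fin t → ℝ) (hx : ∀ i, 0 < x i ∧ x i < 1)
    (hP : ∀ i, μ (X i) ≤ ENNReal.ofReal (x i * ∏ j ∈ D.neighborFinset i, (1 - x j))) :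
    0 < μ (⋂ i, (X i)ᶜ) := by
  classical
  have hx0 : ∀ j, (0:ℝ) < 1 - x j := fun j => by linarith [(hx j).2]
  have main : ∀ Z : Finset (Fin t),
      ∏ j ∈ Z, (1 - x j) ≤ (μ (⋂ j ∈ Z, (X j)ᶜ)).toReal := by
    intro Z
    induction Z using Finset.induction_on with
    | empty => simp [measure_univ]
    | @insert i Z hiZ ihZ =>
      have hkey := key μ X hmeas D hD x hx hP Z.card Z le_rfl i hiZ
      have hset : (⋂ j ∈ insert i Z, (X j)ᶜ) = (⋂ j ∈ Z, (X j)ᶜ) \ X i := by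
        ext w
        simp only [Set.mem_iInter, Set.mem_diff, Set.mem_compl_iff, Finset.mem_insert]
        constructor
        · intro h
          exact ⟨fun a ha => h a (Or.inr ha), h i (Or.inl rfl)⟩
        · rintro ⟨h1, h2⟩ a (rfl | ha)
          · exact h2
          · exact h1 a ha
      have hadd : μ ((⋂ j ∈ Z, (X j)ᶜ) ∩ X i) + μ ((⋂ j ∈ Z, (X j)ᶜ) \ X i)
          = μ (⋂ j ∈ Z, (X j)ᶜ) := measure_inter_add_diff _ (hmeas i)
      have htR : (μ ((⋂ j ∈ Z, (X j)ᶜ) \ X i)).toReal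
          = (μ (⋂ j ∈ Z, (X j)ᶜ)).toReal - (μ ((⋂ j ∈ Z, (X j)ᶜ) ∩ X i)).toReal := by
        rw [← hadd, ENNReal.toReal_add (measure_ne_top _ _) (measure_ne_top _ _)]
        ring
      have hXi : (μ ((⋂ j ∈ Z, (X j)ᶜ) ∩ X i)).toReal
          ≤ x i * (μ (⋂ j ∈ Z, (X j)ᶜ)).toReal := by
        rw [Set.inter_comm]; exact hkey
      calc ∏ j ∈ insert i Z, (1 - x j)
          = (1 - x i) * ∏ j ∈ Z, (1 - x j) := Finset.prod_insert hiZ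
        _ ≤ (1 - x i) * (μ (⋂ j ∈ Z, (X j)ᶜ)).toReal :=
            mul_le_mul_of_nonneg_left ihZ (hx0 i).le
        _ = (μ (⋂ j ∈ Z, (X j)ᶜ)).toReal - x i * (μ (⋂ j ∈ Z, (X j)ᶜ)).toReal := by ring
        _ ≤ (μ (⋂ j ∈ Z, (X j)ᶜ)).toReal - (μ ((⋂ j ∈ Z, (X j)ᶜ) ∩ X i)).toReal := by
            linarith
        _ = (μ ((⋂ j ∈ Z, (X j)ᶜ) \ X i)).toReal := htR.symm
        _ = (μ (⋂ j ∈ insert i Z, (X j)ᶜ)).toReal := by rw [hset]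
  have huniv : (⋂ j ∈ (Finset.univ : Finset (Fin t)), (X j)ᶜ) = ⋂ i, (X i)ᶜ := by
    simp
  have hpos : (0:ℝ) < ∏ j ∈ (Finset.univ : Finset (Fin t)), (1 - x j) :=
    Finset.prod_pos fun j _ => hx0 j
  have := main Finset.univ
  rw [huniv] at this
  have htpos : 0 < (μ (⋂ i, (X i)ᶜ)).toReal := lt_of_lt_of_le hpos this
  exact ENNReal.toReal_pos_iff.mp htpos |>.1
end

section
/- Let 𝒳 = {X_1, …, X_t} be a finite set of events in a probability space with a negative dependency graph D = (𝒳, E). For each i ∈ [t] let ℛ_i be the family of all subsets R of the closed neighbourhood Γ_D*(X_i) such that R is an independent set in D (no two elements of R are adjacent in D). If there is a positive real number μ such that P(X_i) ≤ μ / (Σ_{R∈ℛ_i} μ^{|R|}) for all i ∈ [t], then P(⋂_{i∈[t]} X_iᶜ) > 0. -/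
open MeasureTheory

/-!
Write `Ξ(s) = ∑_{R ⊆ s independent} μ₀^|R|` (`indepPoly`), `N_i` for the closed
neighbourhood of `i` and `A_S = ⋂_{k ∈ S} X_kᶜ`. By strong induction on `S` one proves the
conditional bound `P(X_i ∩ A_S) · Ξ(N_i \ S) ≤ μ₀ · P(A_S)` for `i ∉ S`. Negative dependence
bounds the left side by `P(X_i) · P(A_{S \ N_i})`, and putting the vertices of `S ∩ N_i` back
one at a time shows `Ξ(N_i \ S) · P(A_{S \ N_i}) ≤ Ξ(N_i) · P(A_S)`. Adding `j` to `T`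
multiplies `P(A_T)` by at least `1 - μ₀ / Ξ(N_j \ T)` (the bound for the smaller set `T`), and
`Ξ(A - j) · Ξ(B) ≤ (Ξ(B) - μ₀) · Ξ(A)` for `A ∩ N_j ⊆ B` says that this is at least
`Ξ(A - j) / Ξ(A)`; that inequality comes from splitting independent sets according to whether
they contain `j` and from submultiplicativity of `Ξ`. Putting back all of `[t]`, starting
from `A_∅ = Ω`, gives `P(A_[t]) ≥ 1 / Ξ([t]) > 0`.
-/

open Finset

namespace SimpleGraph

variable {V : Type*} [DecidableEq V] (G : SimpleGraph V) [DecidableRel G.Adj]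

def closedNeighborFinset [Fintype V] (v : V) : Finset V := insert v (G.neighborFinset v)

def indepSubsets (s : Finset V) : Finset (Finset V) :=
  s.powerset.filter fun R => G.IsIndepSet (R : Set V)

def indepPoly (x : ℝ) (s : Finset V) : ℝ := ∑ R ∈ G.indepSubsets s, x ^ #R

variable {G} {x : ℝ}

theorem mem_closedNeighborFinset [Fintype V] {v w : V} :
    w ∈ G.closedNeighborFinset v ↔ w = v ∨ G.Adj v w := by
  simp [closedNeighborFinset]

theorem mem_indepSubsets {s R : Finset V} :
    R ∈ G.indepSubsets s ↔ R ⊆ s ∧ G.IsIndepSet (R : Set V) := by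
  simp [indepSubsets]

theorem indepPoly_pos (hx : 0 ≤ x) (s : Finset V) : 0 < G.indepPoly x s := by
  have hempty : ∅ ∈ G.indepSubsets s := mem_indepSubsets.mpr ⟨empty_subset s, by simp⟩
  calc (0 : ℝ) < x ^ #(∅ : Finset V) := by simp
    _ ≤ G.indepPoly x s := single_le_sum (f := fun R => x ^ #R) (fun R _ => by positivity) hempty

theorem indepPoly_mono (hx : 0 ≤ x) {s t : Finset V} (h : s ⊆ t) :
    G.indepPoly x s ≤ G.indepPoly x t :=
  sum_le_sum_of_subset_of_nonneg (filter_subset_filter _ (powerset_mono.mpr h))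
    fun _ _ _ => by positivity

theorem indepPoly_le_mul_inter_sdiff (hx : 0 ≤ x) (s u : Finset V) :
    G.indepPoly x s ≤ G.indepPoly x (s ∩ u) * G.indepPoly x (s \ u) := by
  set pairs := G.indepSubsets (s ∩ u) ×ˢ G.indepSubsets (s \ u)
  have hcover : G.indepSubsets s ⊆ pairs.image fun p => p.1 ∪ p.2 := by
    intro R hR
    rw [mem_indepSubsets] at hR
    refine mem_image.mpr ⟨(R ∩ u, R \ u), ?_, sup_inf_sdiff R u⟩
    simp only [pairs, mem_product, mem_indepSubsets, coe_inter, coe_sdiff]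
    exact ⟨⟨inter_subset_inter_right hR.1, hR.2.mono Set.inter_subset_left⟩,
      ⟨sdiff_subset_sdiff hR.1 le_rfl, hR.2.mono Set.sdiff_subset⟩⟩
  calc G.indepPoly x s ≤ ∑ R ∈ pairs.image fun p => p.1 ∪ p.2, x ^ #R :=
        sum_le_sum_of_subset_of_nonneg hcover fun _ _ _ => by positivity
    _ ≤ ∑ p ∈ pairs, x ^ #(p.1 ∪ p.2) := sum_image_le_of_nonneg fun _ _ => by positivity
    _ = ∑ p ∈ pairs, x ^ #p.1 * x ^ #p.2 := by
        refine sum_congr rfl fun p hp => ?_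
        simp only [pairs, mem_product, mem_indepSubsets] at hp
        have hdisj : Disjoint p.1 p.2 :=
          (disjoint_sdiff_inter s u).symm.mono hp.1.1 hp.2.1
        rw [card_union_of_disjoint hdisj, pow_add]
    _ = G.indepPoly x (s ∩ u) * G.indepPoly x (s \ u) := by
        rw [indepPoly, indepPoly, sum_mul_sum, sum_product]

theorem indepPoly_erase_add_mul_le [Fintype V] (hx : 0 ≤ x) {s : Finset V} {j : V}
    (hj : j ∈ s) :
    G.indepPoly x (s.erase j) + x * G.indepPoly x (s \ G.closedNeighborFinset j) ≤
      G.indepPoly x s := by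
  set far := G.indepSubsets (s \ G.closedNeighborFinset j)
  have hfar : ∀ R ∈ far, j ∉ R ∧ ∀ b ∈ R, ¬G.Adj j b := by
    intro R hR
    have hout : ∀ b ∈ R, b ∉ G.closedNeighborFinset j :=
      fun b hb => (mem_sdiff.mp ((mem_indepSubsets.mp hR).1 hb)).2
    exact ⟨fun hjR => hout j hjR (mem_closedNeighborFinset.mpr (Or.inl rfl)),
      fun b hb hadj => hout b hb (mem_closedNeighborFinset.mpr (Or.inr hadj))⟩
  have hfar_sum : x * G.indepPoly x (s \ G.closedNeighborFinset j) =
      ∑ R ∈ far.image (insert j), x ^ #R := by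
    rw [sum_image fun R hR R' hR' h => by
      rw [← erase_insert (hfar R hR).1, ← erase_insert (hfar R' hR').1, h]]
    rw [indepPoly, mul_sum]
    refine sum_congr rfl fun R hR => ?_
    rw [card_insert_of_notMem (hfar R hR).1, pow_succ']
  have hdisj : Disjoint (G.indepSubsets (s.erase j)) (far.image (insert j)) := by
    refine Finset.disjoint_left.mpr fun R hR hR' => ?_
    obtain ⟨R', -, rfl⟩ := mem_image.mp hR'
    simpa using (mem_indepSubsets.mp hR).1 (mem_insert_self j R')
  have hsub : G.indepSubsets (s.erase j) ∪ far.image (insert j) ⊆ G.indepSubsets s := by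
    refine union_subset (filter_subset_filter _ (powerset_mono.mpr (erase_subset j s))) ?_
    intro R hR
    obtain ⟨R', hR', rfl⟩ := mem_image.mp hR
    obtain ⟨hR's, hR'indep⟩ := mem_indepSubsets.mp hR'
    rw [mem_indepSubsets, coe_insert, IsIndepSet, Set.pairwise_insert]
    refine ⟨insert_subset hj (hR's.trans sdiff_subset), hR'indep, fun b hb _ => ?_⟩
    have := (hfar R' hR').2 b hb
    exact ⟨this, fun h => this h.symm⟩
  calc G.indepPoly x (s.erase j) + x * G.indepPoly x (s \ G.closedNeighborFinset j)
      = ∑ R ∈ G.indepSubsets (s.erase j) ∪ far.image (insert j), x ^ #R := by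
        rw [sum_union hdisj, hfar_sum, indepPoly]
    _ ≤ G.indepPoly x s := sum_le_sum_of_subset_of_nonneg hsub fun _ _ _ => by positivity

theorem indepPoly_erase_mul_le [Fintype V] (hx : 0 ≤ x) {s t : Finset V} {j : V} (hj : j ∈ s)
    (hst : s ∩ G.closedNeighborFinset j ⊆ t) :
    G.indepPoly x (s.erase j) * G.indepPoly x t ≤ (G.indepPoly x t - x) * G.indepPoly x s := by
  have hsplit :
      G.indepPoly x s ≤ G.indepPoly x t * G.indepPoly x (s \ G.closedNeighborFinset j) :=
    (indepPoly_le_mul_inter_sdiff hx s _).trans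
      (mul_le_mul_of_nonneg_right (indepPoly_mono hx hst) (indepPoly_pos hx _).le)
  have herase := indepPoly_erase_add_mul_le (G := G) hx hj
  linear_combination mul_le_mul_of_nonneg_right herase (indepPoly_pos (G := G) hx t).le +
    mul_le_mul_of_nonneg_left hsplit hx

theorem indepPoly_closedNeighborFinset [Fintype V] (x : ℝ) (v : V) :
    G.indepPoly x (G.closedNeighborFinset v) = ∑ R ∈ univ.filter (fun R : Finset V =>
      R ⊆ insert v (G.neighborFinset v) ∧ ∀ a ∈ R, ∀ b ∈ R, ¬G.Adj a b), x ^ #R := by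
  refine sum_congr (ext fun R => ?_) fun _ _ => rfl
  rw [mem_indepSubsets, mem_filter, IsIndepSet, Set.Pairwise]
  simp only [mem_univ, true_and, mem_coe, closedNeighborFinset]
  exact and_congr_right fun _ =>
    ⟨fun h a ha b hb hab => h ha hb (G.ne_of_adj hab) hab, fun h a ha b hb _ => h a ha b hb⟩

end SimpleGraph

open SimpleGraph

section Avoidance

variable {Ω V : Type*} [MeasurableSpace Ω] [Fintype V] [DecidableEq V] {μ : Measure Ω}
  [IsFiniteMeasure μ] {X : V → Set Ω} {G : SimpleGraph V} [DecidableRel G.Adj] {x : ℝ}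

theorem indepPoly_erase_mul_measureReal_le (hx : 0 ≤ x) {j : V} (hXj : MeasurableSet (X j))
    {A T : Finset V} (hjA : j ∈ A) (hAT : Disjoint A T)
    (hbound : μ.real (X j ∩ ⋂ k ∈ T, (X k)ᶜ) *
      G.indepPoly x (G.closedNeighborFinset j \ T) ≤ x * μ.real (⋂ k ∈ T, (X k)ᶜ)) :
    G.indepPoly x (A.erase j) * μ.real (⋂ k ∈ T, (X k)ᶜ) ≤
      G.indepPoly x A * μ.real (⋂ k ∈ insert j T, (X k)ᶜ) := by
  set B := G.closedNeighborFinset j \ T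
  set pT := μ.real (⋂ k ∈ T, (X k)ᶜ)
  have hkey : G.indepPoly x (A.erase j) * G.indepPoly x B ≤
      (G.indepPoly x B - x) * G.indepPoly x A :=
    indepPoly_erase_mul_le hx hjA fun k hk =>
      mem_sdiff.mpr ⟨(mem_inter.mp hk).2, Finset.disjoint_left.mp hAT (mem_inter.mp hk).1⟩
  have hsplit :
      μ.real (X j ∩ ⋂ k ∈ T, (X k)ᶜ) + μ.real (⋂ k ∈ insert j T, (X k)ᶜ) = pT := by
    rw [Finset.set_biInter_insert, ← Set.sdiff_eq_compl_inter, Set.inter_comm]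
    exact measureReal_inter_add_sdiff hXj
  have hB := indepPoly_pos (G := G) hx B
  have hA := indepPoly_pos (G := G) hx A
  refine le_of_mul_le_mul_right ?_ hB
  calc G.indepPoly x (A.erase j) * pT * G.indepPoly x B
      ≤ (G.indepPoly x B - x) * G.indepPoly x A * pT := by
        linear_combination mul_le_mul_of_nonneg_right hkey measureReal_nonneg
    _ ≤ G.indepPoly x A * μ.real (⋂ k ∈ insert j T, (X k)ᶜ) * G.indepPoly x B := by
        linear_combination mul_le_mul_of_nonneg_left hbound hA.le +
          G.indepPoly x A * G.indepPoly x B * hsplit.symm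

theorem indepPoly_sdiff_mul_measureReal_le (hx : 0 ≤ x) (hmeas : ∀ i, MeasurableSet (X i))
    {A U W : Finset V} (hAW : Disjoint A W) (hUA : U ⊆ A)
    (hbound : ∀ j ∈ U, ∀ T ⊆ U ∪ W, j ∉ T →
      μ.real (X j ∩ ⋂ k ∈ T, (X k)ᶜ) * G.indepPoly x (G.closedNeighborFinset j \ T) ≤
        x * μ.real (⋂ k ∈ T, (X k)ᶜ)) :
    G.indepPoly x (A \ U) * μ.real (⋂ k ∈ W, (X k)ᶜ) ≤
      G.indepPoly x A * μ.real (⋂ k ∈ U ∪ W, (X k)ᶜ) := by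
  induction U using Finset.induction_on with
  | empty => simp
  | insert j U hjU ih =>
    have hjA : j ∈ A \ U := mem_sdiff.mpr ⟨hUA (mem_insert_self j U), hjU⟩
    have hdisj : Disjoint (A \ U) (U ∪ W) :=
      disjoint_union_right.mpr ⟨sdiff_disjoint, hAW.mono_left sdiff_subset⟩
    have hstep := indepPoly_erase_mul_measureReal_le hx (hmeas j) hjA hdisj
      (hbound j (mem_insert_self j U) _ (union_subset_union (subset_insert j U) le_rfl)
        (Finset.disjoint_left.mp hdisj hjA))
    rw [← sdiff_insert, ← insert_union] at hstep
    have hIH := ih ((subset_insert j U).trans hUA) fun i hi T hT =>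
      hbound i (mem_insert_of_mem hi) T (hT.trans (union_subset_union (subset_insert j U) le_rfl))
    have hpos := indepPoly_pos (G := G) hx (A \ U)
    refine le_of_mul_le_mul_right ?_ hpos
    calc G.indepPoly x (A \ insert j U) * μ.real (⋂ k ∈ W, (X k)ᶜ) * G.indepPoly x (A \ U)
        ≤ G.indepPoly x (A \ insert j U) *
            (G.indepPoly x A * μ.real (⋂ k ∈ U ∪ W, (X k)ᶜ)) := by
          linear_combination mul_le_mul_of_nonneg_left hIH
            (indepPoly_pos (G := G) hx _).le
      _ ≤ G.indepPoly x A * μ.real (⋂ k ∈ insert j U ∪ W, (X k)ᶜ) *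
            G.indepPoly x (A \ U) := by
          linear_combination mul_le_mul_of_nonneg_left hstep
            (indepPoly_pos (G := G) hx A).le

end Avoidance

theorem measureReal_inter_mul_indepPoly_le {Ω : Type*} [MeasurableSpace Ω] {μ : Measure Ω}
    [IsFiniteMeasure μ] {t : ℕ} {X : Fin t → Set Ω} (hmeas : ∀ i, MeasurableSet (X i))
    {D : SimpleGraph (Fin t)} [DecidableRel D.Adj] (hD : IsNegDepGraph μ X D) {x : ℝ}
    (hx : 0 ≤ x) (hP : ∀ i, μ.real (X i) * D.indepPoly x (D.closedNeighborFinset i) ≤ x)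
    (S : Finset (Fin t)) {i : Fin t} (hiS : i ∉ S) :
    μ.real (X i ∩ ⋂ k ∈ S, (X k)ᶜ) * D.indepPoly x (D.closedNeighborFinset i \ S) ≤
      x * μ.real (⋂ k ∈ S, (X k)ᶜ) := by
  induction S using Finset.strongInduction generalizing i with
  | H S ih =>
  set N := D.closedNeighborFinset i
  have hneg :
      μ.real (X i ∩ ⋂ k ∈ S, (X k)ᶜ) ≤ μ.real (X i) * μ.real (⋂ k ∈ S \ N, (X k)ᶜ) := by
    have hZ : ∀ j ∈ S \ N, j ≠ i ∧ ¬D.Adj i j := fun j hj => by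
      simpa [N, mem_closedNeighborFinset, not_or] using (mem_sdiff.mp hj).2
    calc μ.real (X i ∩ ⋂ k ∈ S, (X k)ᶜ) ≤ μ.real (X i ∩ ⋂ k ∈ S \ N, (X k)ᶜ) :=
          measureReal_mono (Set.inter_subset_inter_right _
            (Set.biInter_subset_biInter_left fun k hk => (mem_sdiff.mp hk).1))
      _ ≤ μ.real (X i) * μ.real (⋂ k ∈ S \ N, (X k)ᶜ) := by
          simp only [measureReal_def, ← ENNReal.toReal_mul]
          exact ENNReal.toReal_mono (by finiteness) (hD i _ hZ)
  have htel := indepPoly_sdiff_mul_measureReal_le hx hmeas (G := D) (A := N) (U := S ∩ N)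
    (W := S \ N) disjoint_sdiff inter_subset_right fun j hj T hT hjT =>
      ih T (ssubset_of_subset_of_ne (by rwa [union_comm, sdiff_union_inter] at hT)
        fun h => hjT (h ▸ (mem_inter.mp hj).1)) hjT
  rw [union_comm, sdiff_union_inter, sdiff_inter_self_right] at htel
  have hN := indepPoly_pos (G := D) hx N
  refine le_of_mul_le_mul_right ?_ hN
  calc μ.real (X i ∩ ⋂ k ∈ S, (X k)ᶜ) * D.indepPoly x (N \ S) * D.indepPoly x N
      ≤ μ.real (X i) * (D.indepPoly x (N \ S) * μ.real (⋂ k ∈ S \ N, (X k)ᶜ)) *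
          D.indepPoly x N := by
        linear_combination mul_le_mul_of_nonneg_right hneg
          (mul_nonneg (indepPoly_pos (G := D) hx _).le hN.le)
    _ ≤ μ.real (X i) * (D.indepPoly x N * μ.real (⋂ k ∈ S, (X k)ᶜ)) *
          D.indepPoly x N := by
        gcongr
    _ ≤ x * μ.real (⋂ k ∈ S, (X k)ᶜ) * D.indepPoly x N := by
        have hS : 0 ≤ μ.real (⋂ k ∈ S, (X k)ᶜ) := measureReal_nonneg
        linear_combination mul_le_mul_of_nonneg_right (hP i) (mul_nonneg hN.le hS)

/-- **Lemma 10(i)** (Bissacot–Fernández–Procacci–Scoppola, cluster-expansion local lemma,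
symmetric form): if there is `μ₀ > 0` with
`P(X i) ≤ μ₀ / (Σ_{R ∈ ℛ_i} μ₀^{|R|})` for all `i`, where `ℛ_i` is the family of all
independent subsets of the closed neighbourhood of `X i` in a negative dependency graph `D`,
then with positive probability no event occurs. -/
theorem cluster_expansion_local_lemma_symmetric
    {Ω : Type*} [MeasurableSpace Ω] (μ : Measure Ω) [IsProbabilityMeasure μ]
    {t : ℕ} (X : Fin t → Set Ω) (hmeas : ∀ i, MeasurableSet (X i))
    (D : SimpleGraph (Fin t)) [DecidableRel D.Adj]
    (hD : IsNegDepGraph μ X D)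
    (μ₀ : ℝ) (hμ₀ : 0 < μ₀)
    (hP : ∀ i, μ (X i) ≤ ENNReal.ofReal (μ₀ /
      ∑ R ∈ Finset.univ.filter (fun R : Finset (Fin t) =>
          R ⊆ insert i (D.neighborFinset i) ∧ ∀ a ∈ R, ∀ b ∈ R, ¬ D.Adj a b),
        μ₀ ^ R.card)) :
    0 < μ (⋂ i, (X i)ᶜ) := by
  have hP' : ∀ i, μ.real (X i) * D.indepPoly μ₀ (D.closedNeighborFinset i) ≤ μ₀ := by
    intro i
    have hpos := indepPoly_pos (G := D) hμ₀.le (D.closedNeighborFinset i)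
    rw [← le_div_iff₀ hpos]
    refine ENNReal.toReal_le_of_le_ofReal (div_pos hμ₀ hpos).le ?_
    rw [indepPoly_closedNeighborFinset]
    -- the two filters differ only in their decidability instances
    convert hP i
  have h := indepPoly_sdiff_mul_measureReal_le hμ₀.le hmeas (G := D) (A := univ) (U := univ)
    (W := ∅) (disjoint_empty_right _) subset_rfl fun j _ T _ hjT =>
      measureReal_inter_mul_indepPoly_le hmeas hD hμ₀.le hP' T hjT
  simp only [sdiff_self, bot_eq_empty, notMem_empty, Set.iInter_of_empty, Set.iInter_univ,
    probReal_univ, mul_one, union_empty, mem_univ, Set.iInter_true] at h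
  have hpos : 0 < μ.real (⋂ i, (X i)ᶜ) :=
    pos_of_mul_pos_right ((indepPoly_pos hμ₀.le ∅).trans_le h)
      (indepPoly_pos hμ₀.le univ).le
  exact (ENNReal.toReal_pos_iff.mp hpos).1
end

section
/- Let 𝒳 = {X_1, …, X_t} be a finite set of events in a probability space with a negative dependency graph D = (𝒳, E). Suppose there are an integer ℓ and positive integers q_1, …, q_ℓ such that for each i ∈ [t] the closed neighbourhood Γ_D*(X_i) can be written as a union ⋃_{j∈[ℓ]} Q_{i,j} (not necessarily disjoint), where each Q_{i,j} is a clique in D of size |Q_{i,j}| ≤ q_j. If there is a positive real number μ such that P(X_i) ≤ μ / ∏_{j∈[ℓ]} (1 + μ·q_j) for all i ∈ [t], then P(⋂_{i∈[t]} X_iᶜ) > 0. -/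
open MeasureTheory

open Finset

/-!
Write `A S` for the event that no `X j` with `j ∈ S` occurs, and
`F i S = μ₀ / ∏ j (1 + μ₀ |Q i j \ S|)`. By induction on `S` one shows
`P(X i ∩ A S) ≤ F i S · P(A S)` for `i ∉ S`. If no element of `S` is adjacent to `i`, this is
negative dependence. Otherwise pick a neighbour `k ∈ S` of `i`, lying in some clique `Q i j₀`,
and put `S' = S \ {k}`. Since `Q i j₀` is a clique through `k`, the cliques around `k` cover
`Q i j₀ \ S'`, so `F k S' ≤ c := μ₀ / (1 + μ₀ |Q i j₀ \ S'|)`, whence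
`P(A S) ≥ (1 - c) P(A S')`; and removing `k` from `S` increases exactly the factor `j₀` of the
product, so `F i S' ≤ (1 - c) F i S`. Finally `F i S < 1` because `i ∈ Q i j₀ \ S` for some `j₀`,
so adding the events one at a time keeps `P(A S)` positive.
-/

theorem one_add_sum_le_prod_one_add {ι R : Type*} [CommSemiring R] [PartialOrder R]
    [IsOrderedRing R] (s : Finset ι) {f : ι → R} (hf : ∀ j ∈ s, 0 ≤ f j) :
    1 + ∑ j ∈ s, f j ≤ ∏ j ∈ s, (1 + f j) := by
  induction s using Finset.cons_induction with
  | empty => simp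
  | cons a s ha ih =>
    rw [sum_cons, prod_cons]
    have hfa : 0 ≤ f a := hf a (mem_cons_self a s)
    have hfs : ∀ j ∈ s, 0 ≤ f j := fun j hj => hf j (mem_cons_of_mem hj)
    calc 1 + (f a + ∑ j ∈ s, f j) ≤ 1 + (f a + ∑ j ∈ s, f j) + f a * ∑ j ∈ s, f j :=
          le_add_of_nonneg_right (mul_nonneg hfa (sum_nonneg hfs))
      _ = (1 + f a) * (1 + ∑ j ∈ s, f j) := by ring
      _ ≤ (1 + f a) * ∏ j ∈ s, (1 + f j) := by
          gcongr
          · exact add_nonneg zero_le_one hfa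
          · exact ih hfs

theorem MeasureTheory.measureReal_le_inter_add_sdiff {Ω : Type*} [MeasurableSpace Ω]
    (μ : Measure Ω) (s t : Set Ω) : μ.real s ≤ μ.real (s ∩ t) + μ.real (s \ t) := by
  simpa using measureReal_union_le (μ := μ) (s ∩ t) (s \ t)

section CoverBound

variable {ι : Type*} [Fintype ι] {μ₀ : ℝ}

noncomputable def coverBound (μ₀ : ℝ) (n : ι → ℕ) : ℝ := μ₀ / ∏ j, (1 + μ₀ * n j)

theorem one_add_mul_sum_le_prod (hμ₀ : 0 ≤ μ₀) (n : ι → ℕ) :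
    1 + μ₀ * ∑ j, (n j : ℝ) ≤ ∏ j, (1 + μ₀ * n j) := by
  rw [mul_sum]
  exact one_add_sum_le_prod_one_add _ fun j _ => by positivity

theorem prod_one_add_mul_pos (hμ₀ : 0 ≤ μ₀) (n : ι → ℕ) : 0 < ∏ j, (1 + μ₀ * n j) :=
  prod_pos fun j _ => by positivity

theorem coverBound_nonneg (hμ₀ : 0 ≤ μ₀) (n : ι → ℕ) : 0 ≤ coverBound μ₀ n :=
  div_nonneg hμ₀ (prod_one_add_mul_pos hμ₀ n).le

theorem coverBound_antitone (hμ₀ : 0 ≤ μ₀) : Antitone (coverBound (ι := ι) μ₀) :=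
  fun n m hnm => div_le_div_of_nonneg_left hμ₀ (prod_one_add_mul_pos hμ₀ n) <|
    prod_le_prod (fun j _ => by positivity) fun j _ => by gcongr; exact hnm j

theorem coverBound_le_of_le_sum (hμ₀ : 0 ≤ μ₀) {n : ι → ℕ} {N : ℕ} (h : N ≤ ∑ j, n j) :
    coverBound μ₀ n ≤ μ₀ / (1 + μ₀ * N) :=
  div_le_div_of_nonneg_left hμ₀ (by positivity) <|
    calc 1 + μ₀ * N ≤ 1 + μ₀ * ∑ j, (n j : ℝ) := by gcongr; exact_mod_cast h
      _ ≤ _ := one_add_mul_sum_le_prod hμ₀ n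

theorem coverBound_lt_one (hμ₀ : 0 ≤ μ₀) {n : ι → ℕ} {j : ι} (hj : n j ≠ 0) :
    coverBound μ₀ n < 1 := by
  refine (coverBound_le_of_le_sum hμ₀ (N := 1) ?_).trans_lt ?_
  · exact (Nat.one_le_iff_ne_zero.2 hj).trans (single_le_sum (fun _ _ => Nat.zero_le _)
      (mem_univ j))
  · rw [Nat.cast_one, mul_one, div_lt_one (by positivity)]
    linarith

theorem coverBound_le_mul_of_le_of_eq_succ [DecidableEq ι] (hμ₀ : 0 ≤ μ₀) {n m : ι → ℕ}
    (hnm : n ≤ m) {j₀ : ι} (hj₀ : m j₀ = n j₀ + 1) :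
    coverBound μ₀ m ≤ coverBound μ₀ n * (1 - μ₀ / (1 + μ₀ * (n j₀ + 1))) := by
  have hrest : ∏ j ∈ univ.erase j₀, (1 + μ₀ * n j) ≤ ∏ j ∈ univ.erase j₀, (1 + μ₀ * m j) :=
    prod_le_prod (fun j _ => by positivity) fun j _ => by gcongr; exact hnm j
  simp only [coverBound, ← mul_prod_erase univ _ (mem_univ j₀), hj₀]
  push_cast
  rw [one_sub_div (by positivity : (0 : ℝ) < 1 + μ₀ * (n j₀ + 1)).ne', div_mul_div_comm]
  calc _ ≤ μ₀ / ((1 + μ₀ * (n j₀ + 1)) * ∏ j ∈ univ.erase j₀, (1 + μ₀ * n j)) := by gcongr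
    _ = _ := by
      rw [show 1 + μ₀ * (n j₀ + 1) - μ₀ = 1 + μ₀ * n j₀ by ring]
      field_simp

end CoverBound

theorem SimpleGraph.card_sdiff_le_sum_of_isClique {V ι : Type*} [Fintype V] [DecidableEq V]
    [Fintype ι] {G : SimpleGraph V} [DecidableRel G.Adj] {k : V} {Q : ι → Finset V}
    (hcover : insert k (G.neighborFinset k) = univ.biUnion Q) {C : Finset V}
    (hC : G.IsClique (C : Set V)) (hk : k ∈ C) (T : Finset V) :
    #(C \ T) ≤ ∑ j, #(Q j \ T) := by
  refine (card_le_card fun x hx => ?_).trans card_biUnion_le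
  obtain ⟨hxC, hxT⟩ := mem_sdiff.1 hx
  have hx : x ∈ insert k (G.neighborFinset k) := by
    rcases eq_or_ne k x with rfl | hkx
    · exact mem_insert_self k _
    · exact mem_insert_of_mem ((G.mem_neighborFinset k x).2 (hC hk hxC hkx))
  obtain ⟨j, -, hxQ⟩ := mem_biUnion.1 (hcover ▸ hx)
  exact mem_biUnion.2 ⟨j, mem_univ j, mem_sdiff.2 ⟨hxQ, hxT⟩⟩

theorem MeasureTheory.one_sub_mul_measureReal_le_of_inter_le {Ω : Type*} [MeasurableSpace Ω]
    {μ : Measure Ω} {A B : Set Ω} {c : ℝ} (h : μ.real (B ∩ A) ≤ c * μ.real A) :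
    (1 - c) * μ.real A ≤ μ.real (A \ B) := by
  have := measureReal_le_inter_add_sdiff μ A B
  rw [Set.inter_comm] at this
  linarith

theorem set_biInter_compl_insert {Ω ι : Type*} [DecidableEq ι] (X : ι → Set Ω) (k : ι)
    (S : Finset ι) :
    ⋂ j ∈ insert k S, (X j)ᶜ = (⋂ j ∈ S, (X j)ᶜ) \ X k := by
  rw [set_biInter_insert, Set.sdiff_eq_compl_inter]

section NegDepGraph

variable {Ω : Type*} [MeasurableSpace Ω] {μ : Measure Ω} [IsFiniteMeasure μ] {t : ℕ}
  {X : Fin t → Set Ω} {D : SimpleGraph (Fin t)}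

theorem IsNegDepGraph.measureReal_inter_le (hD : IsNegDepGraph μ X D) {i : Fin t}
    {Z : Finset (Fin t)} (hZ : ∀ j ∈ Z, j ≠ i ∧ ¬ D.Adj i j) :
    μ.real (X i ∩ ⋂ j ∈ Z, (X j)ᶜ) ≤ μ.real (X i) * μ.real (⋂ j ∈ Z, (X j)ᶜ) := by
  simpa only [measureReal_def, ENNReal.toReal_mul] using
    ENNReal.toReal_mono (by finiteness) (hD i Z hZ)

variable [DecidableRel D.Adj] {ι : Type*} [Fintype ι] {Q : Fin t → ι → Finset (Fin t)}
  {μ₀ : ℝ}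

theorem IsNegDepGraph.measureReal_inter_avoid_le (hD : IsNegDepGraph μ X D)
    (hcover : ∀ i, insert i (D.neighborFinset i) = univ.biUnion (Q i))
    (hclique : ∀ i j, D.IsClique (Q i j : Set (Fin t))) (hμ₀ : 0 ≤ μ₀)
    (hP : ∀ i, μ.real (X i) ≤ coverBound μ₀ fun j => #(Q i j)) (S : Finset (Fin t))
    {i : Fin t} (hi : i ∉ S) :
    μ.real (X i ∩ ⋂ j ∈ S, (X j)ᶜ) ≤
      coverBound μ₀ (fun j => #(Q i j \ S)) * μ.real (⋂ j ∈ S, (X j)ᶜ) := by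
  classical
  induction S using Finset.strongInduction generalizing i with
  | H S ih =>
  by_cases hadj : ∃ k ∈ S, D.Adj i k
  · obtain ⟨k, hkS, hik⟩ := hadj
    obtain ⟨j₀, -, hkQ⟩ :=
      mem_biUnion.1 (hcover i ▸ mem_insert_of_mem ((D.mem_neighborFinset i k).2 hik))
    have hS : S = insert k (S.erase k) := (insert_erase hkS).symm
    set S' := S.erase k
    have hQ : ∀ j, Q i j \ S ⊆ Q i j \ S' := fun j => sdiff_subset_sdiff le_rfl (erase_subset k S)
    have hQ₀ : #(Q i j₀ \ S') = #(Q i j₀ \ S) + 1 := by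
      rw [sdiff_erase hkQ, card_insert_of_notMem (by simp [hkS])]
    set c := μ₀ / (1 + μ₀ * (#(Q i j₀ \ S) + 1))
    have hFi : coverBound μ₀ (fun j => #(Q i j \ S')) ≤
        coverBound μ₀ (fun j => #(Q i j \ S)) * (1 - c) :=
      coverBound_le_mul_of_le_of_eq_succ hμ₀ (fun j => card_le_card (hQ j)) hQ₀
    have hFk : coverBound μ₀ (fun j => #(Q k j \ S')) ≤ c := by
      have hsum :=
        hQ₀ ▸ SimpleGraph.card_sdiff_le_sum_of_isClique (hcover k) (hclique i j₀) hkQ S'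
      simpa only [c, Nat.cast_add, Nat.cast_one] using coverBound_le_of_le_sum hμ₀ hsum
    have hA : (1 - c) * μ.real (⋂ j ∈ S', (X j)ᶜ) ≤ μ.real (⋂ j ∈ S, (X j)ᶜ) := by
      rw [hS, set_biInter_compl_insert]
      refine one_sub_mul_measureReal_le_of_inter_le
        ((ih S' (erase_ssubset hkS) (notMem_erase k S)).trans ?_)
      gcongr
    calc μ.real (X i ∩ ⋂ j ∈ S, (X j)ᶜ) ≤ μ.real (X i ∩ ⋂ j ∈ S', (X j)ᶜ) :=
          measureReal_mono <| Set.inter_subset_inter_right _ <|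
            Set.biInter_subset_biInter_left (coe_subset.2 (erase_subset k S))
      _ ≤ coverBound μ₀ (fun j => #(Q i j \ S')) * μ.real (⋂ j ∈ S', (X j)ᶜ) :=
          ih S' (erase_ssubset hkS) fun h => hi (mem_of_mem_erase h)
      _ ≤ coverBound μ₀ (fun j => #(Q i j \ S)) * (1 - c) * μ.real (⋂ j ∈ S', (X j)ᶜ) := by
          gcongr
      _ ≤ coverBound μ₀ (fun j => #(Q i j \ S)) * μ.real (⋂ j ∈ S, (X j)ᶜ) := by
          rw [mul_assoc]
          gcongr
          exact coverBound_nonneg hμ₀ _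
  · push Not at hadj
    calc _ ≤ μ.real (X i) * μ.real (⋂ j ∈ S, (X j)ᶜ) :=
          hD.measureReal_inter_le fun j hj => ⟨ne_of_mem_of_not_mem hj hi, hadj j hj⟩
      _ ≤ _ := by
          gcongr
          exact (hP i).trans (coverBound_antitone hμ₀ fun j => card_le_card sdiff_subset)

theorem IsNegDepGraph.measureReal_avoid_pos [NeZero μ] (hD : IsNegDepGraph μ X D)
    (hcover : ∀ i, insert i (D.neighborFinset i) = univ.biUnion (Q i))
    (hclique : ∀ i j, D.IsClique (Q i j : Set (Fin t))) (hμ₀ : 0 ≤ μ₀)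
    (hP : ∀ i, μ.real (X i) ≤ coverBound μ₀ fun j => #(Q i j)) (S : Finset (Fin t)) :
    0 < μ.real (⋂ j ∈ S, (X j)ᶜ) := by
  induction S using Finset.induction_on with
  | empty => simp
  | insert i S hi ih =>
    obtain ⟨j₀, -, hij₀⟩ := mem_biUnion.1 (hcover i ▸ mem_insert_self i _)
    have hF : coverBound μ₀ (fun j => #(Q i j \ S)) < 1 :=
      coverBound_lt_one hμ₀ (j := j₀) (card_ne_zero.2 ⟨i, mem_sdiff.2 ⟨hij₀, hi⟩⟩)
    rw [set_biInter_compl_insert]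
    exact (mul_pos (sub_pos.2 hF) ih).trans_le <| one_sub_mul_measureReal_le_of_inter_le <|
      hD.measureReal_inter_avoid_le hcover hclique hμ₀ hP S hi

end NegDepGraph

theorem cluster_expansion_local_lemma_clique_cover_general
    {Ω : Type*} [MeasurableSpace Ω] (μ : Measure Ω) [IsProbabilityMeasure μ]
    {t : ℕ} (X : Fin t → Set Ω)
    (D : SimpleGraph (Fin t)) [DecidableRel D.Adj]
    (hD : IsNegDepGraph μ X D)
    (ℓ : ℕ) (q : Fin ℓ → ℕ)
    (Q : Fin t → Fin ℓ → Finset (Fin t))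
    (hcover : ∀ i, insert i (D.neighborFinset i) = Finset.univ.biUnion (Q i))
    (hclique : ∀ i j, D.IsClique (Q i j : Set (Fin t)))
    (hcard : ∀ i j, (Q i j).card ≤ q j)
    (μ₀ : ℝ) (hμ₀ : 0 < μ₀)
    (hP : ∀ i, μ (X i) ≤ ENNReal.ofReal (μ₀ / ∏ j : Fin ℓ, (1 + μ₀ * q j))) :
    0 < μ (⋂ i, (X i)ᶜ) := by
  have hP' : ∀ i, μ.real (X i) ≤ coverBound μ₀ fun j => #(Q i j) := fun i =>
    (ENNReal.toReal_le_of_le_ofReal (coverBound_nonneg hμ₀.le q) (hP i)).trans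
      (coverBound_antitone hμ₀.le (hcard i))
  have hpos := hD.measureReal_avoid_pos hcover hclique hμ₀.le hP' univ
  simp only [mem_univ, Set.iInter_true] at hpos
  exact (ENNReal.toReal_pos_iff.1 hpos).1

/-- **Remark after Lemma 10, first part** (condition (3')): suppose that the closed
neighbourhood of each event `X i` in a negative dependency graph `D` is a union of `ℓ`
cliques `Q i j` with `|Q i j| ≤ q j`.  If there is `μ₀ > 0` with
`P(X i) ≤ μ₀ / Π_j (1 + μ₀·q j)` for all `i`, then with positive probability no event
occurs. -/
theorem cluster_expansion_local_lemma_clique_cover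
    {Ω : Type*} [MeasurableSpace Ω] (μ : Measure Ω) [IsProbabilityMeasure μ]
    {t : ℕ} (X : Fin t → Set Ω) (hmeas : ∀ i, MeasurableSet (X i))
    (D : SimpleGraph (Fin t)) [DecidableRel D.Adj]
    (hD : IsNegDepGraph μ X D)
    (ℓ : ℕ) (q : Fin ℓ → ℕ) (hq : ∀ j, 0 < q j)
    (Q : Fin t → Fin ℓ → Finset (Fin t))
    (hcover : ∀ i, insert i (D.neighborFinset i) = Finset.univ.biUnion (Q i))
    (hclique : ∀ i j, D.IsClique (Q i j : Set (Fin t)))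
    (hcard : ∀ i j, (Q i j).card ≤ q j)
    (μ₀ : ℝ) (hμ₀ : 0 < μ₀)
    (hP : ∀ i, μ (X i) ≤ ENNReal.ofReal (μ₀ / ∏ j : Fin ℓ, (1 + μ₀ * q j))) :
    0 < μ (⋂ i, (X i)ᶜ) :=
  cluster_expansion_local_lemma_clique_cover_general μ X D hD ℓ q Q hcover hclique hcard μ₀ hμ₀ hP
end
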